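/- arXiv:1112.0608 — 5 statements merged into one kernel-verified Lean document; each statement's English description precedes it below -/
import Mathlib

section
/- Let M = ⊕_{i∈I} M_i be a direct sum decomposition of a torsion-free module M over a commutative domain into rank-one submodules. Then the family 𝓑 = { ⊕_{j∈J} M_j : J ⊆ I } of all partial direct sums is a G*(ℵ₀)-family of submodules of M. -/
open Cardinal Pointwise

universe u v

/-- `N` is a pure submodule of `P` (inside ambient `M`): every finite system of linear
equations with constants in `N` solvable in `P` is solvable in `N`. -/
def IsPureIn {R : Type u} {M : Type v} [CommRing R] [AddCommGroup M] [Module R M]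
    (N P : Submodule R M) : Prop :=
  ∀ (m n : ℕ) (r : Fin m → Fin n → R) (a : Fin m → M),
    (∀ i, a i ∈ N) →
    (∃ x : Fin n → M, (∀ j, x j ∈ P) ∧ ∀ i, ∑ j, r i j • x j = a i) →
    ∃ y : Fin n → M, (∀ j, y j ∈ N) ∧ ∀ i, ∑ j, r i j • y j = a i

/-- `N` is a pure submodule of `M`. -/
def IsPure {R : Type u} {M : Type v} [CommRing R] [AddCommGroup M] [Module R M]
    (N : Submodule R M) : Prop :=
  IsPureIn N ⊤

/-- A module is completely decomposable if it is the (internal) direct sum of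
rank-one submodules. -/
def CompletelyDecomposable (R : Type u) (M : Type v) [CommRing R] [AddCommGroup M]
    [Module R M] : Prop :=
  ∃ (ι : Type v) (p : ι → Submodule R M),
    (∀ i, Module.rank R (p i) = 1) ∧
    (letI : DecidableEq ι := Classical.decEq ι; DirectSum.IsInternal p)

def IsGStarFamily {R : Type u} {M : Type v} [CommRing R] [AddCommGroup M] [Module R M]
    (κ : Cardinal.{v}) (𝓑 : Set (Submodule R M)) : Prop :=
  ⊥ ∈ 𝓑 ∧ ⊤ ∈ 𝓑 ∧
  (∀ S : Set (Submodule R M), S ⊆ 𝓑 → S.Nonempty → IsChain (· ≤ ·) S → sSup S ∈ 𝓑) ∧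
  (∀ H : Set M, #H ≤ κ → ∀ A₀ ∈ 𝓑, ∃ A ∈ 𝓑, A₀ ≤ A ∧ H ⊆ ↑A ∧
    Module.rank R (↥A ⧸ Submodule.comap A.subtype A₀) ≤ κ)

section Aux

variable {R : Type u} {M : Type v} [CommRing R] [IsDomain R]
    [AddCommGroup M] [Module R M] [NoZeroSMulDivisors R M]

lemma rank_one_scale (P : Submodule R M) (hP : Module.rank R P ≤ 1) {e x : M}
    (heP : e ∈ P) (he : e ≠ 0) (hx : x ∈ P) :
    ∃ a : R, a ≠ 0 ∧ a • x ∈ Submodule.span R {e} := by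
  by_contra hcon
  push_neg at hcon
  have hind : LinearIndependent R ![(⟨x, hx⟩ : P), ⟨e, heP⟩] := by
    rw [LinearIndependent.pair_iff]
    intro s t hst
    have hst' : s • x + t • e = 0 := by
      have := congrArg (Subtype.val) hst
      simpa using this
    have hs : s = 0 := by
      by_contra hs
      refine hcon s hs ?_
      have hx' : s • x = (-t) • e := by
        rw [neg_smul, eq_neg_iff_add_eq_zero]; exact hst'
      rw [hx']
      exact Submodule.smul_mem _ _ (Submodule.mem_span_singleton_self e)
    refine ⟨hs, ?_⟩
    rw [hs, zero_smul, zero_add] at hst'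
    rcases smul_eq_zero.mp hst' with h | h
    · exact h
    · exact absurd h he
  have h2 := hind.cardinal_lift_le_rank.trans (Cardinal.lift_le.mpr hP)
  simp [Cardinal.mk_fin] at h2

lemma biSup_scale {I : Type v} (p : I → Submodule R M) {J' : Set I}
    (hrank : ∀ i, Module.rank R (p i) = 1) (e : I → M)
    (he1 : ∀ i, e i ∈ p i) (he2 : ∀ i, e i ≠ 0) {x : M}
    (hx : x ∈ ⨆ j ∈ J', p j) :
    ∃ a : R, a ≠ 0 ∧ a • x ∈ Submodule.span R (⋃ j ∈ J', {e j}) := by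
  rw [iSup_subtype'] at hx
  refine Submodule.iSup_induction (motive := fun y => ∃ a : R, a ≠ 0 ∧ a • y ∈ Submodule.span R (⋃ j ∈ J', {e j})) (fun j : J' => p j.1) hx ?_ ?_ ?_
  · rintro ⟨i, hi⟩ y hy
    obtain ⟨a, ha, hmem⟩ := rank_one_scale (p i) (hrank i).le (he1 i) (he2 i) hy
    refine ⟨a, ha, Submodule.span_mono ?_ hmem⟩
    intro z hz
    rcases hz with rfl
    exact Set.mem_biUnion hi rfl
  · exact ⟨1, one_ne_zero, by simp⟩
  · rintro y z ⟨a, ha, hay⟩ ⟨b, hb, hbz⟩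
    refine ⟨a * b, mul_ne_zero ha hb, ?_⟩
    have : (a * b) • (y + z) = b • (a • y) + a • (b • z) := by
      rw [smul_add, smul_smul, smul_smul, mul_comm b a]
    rw [this]
    exact Submodule.add_mem _ (Submodule.smul_mem _ _ hay) (Submodule.smul_mem _ _ hbz)

lemma smul_linearIndependent {ι : Type*} {v : ι → M} (hv : LinearIndependent R v)
    (a : ι → R) (ha : ∀ i, a i ≠ 0) : LinearIndependent R fun i => a i • v i := by
  rw [linearIndependent_iff'] at hv ⊢
  intro t g hg i hit
  have h0 : ∑ j ∈ t, (g j * a j) • v j = 0 := by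
    simpa [mul_smul] using hg
  have := hv t (fun j => g j * a j) h0 i hit
  exact (mul_eq_zero.mp this).resolve_right (ha i)

end Aux

/-- Example 1: for a torsion-free module `M = ⊕_{i ∈ I} M_i` decomposed into
rank-one submodules over a commutative domain, the family of all partial direct sums
`⊕_{j ∈ J} M_j` (`J ⊆ I`) is a `G*(ℵ₀)`-family of submodules of `M`. -/
theorem partialSums_isGStarFamily {R : Type u} {M : Type v} [CommRing R] [IsDomain R]
    [AddCommGroup M] [Module R M] [NoZeroSMulDivisors R M]
    {I : Type v} [DecidableEq I] (p : I → Submodule R M)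
    (hinternal : DirectSum.IsInternal p)
    (hrank : ∀ i, Module.rank R (p i) = 1) :
    IsGStarFamily (Cardinal.aleph0 : Cardinal.{v})
      {N : Submodule R M | ∃ J : Set I, N = ⨆ j ∈ J, p j} := by
  classical
  refine ⟨⟨∅, by simp⟩, ⟨Set.univ, by simp [hinternal.submodule_iSup_eq_top]⟩, ?_, ?_⟩
  · intro S hS hne hchain
    choose Jf hJf using fun N : S => hS N.2
    refine ⟨⋃ N : S, Jf N, ?_⟩
    rw [sSup_eq_iSup', iSup_iUnion]
    exact iSup_congr fun N => hJf N
  · intro H hH A₀ hA₀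
    obtain ⟨J₀, rfl⟩ := hA₀
    have hmemtop : ∀ m : M, ∃ t : Finset I, m ∈ ⨆ i ∈ t, p i := fun m =>
      Submodule.mem_iSup_iff_exists_finset.mp
        (by rw [hinternal.submodule_iSup_eq_top]; exact Submodule.mem_top)
    choose t ht using hmemtop
    set J' : Set I := ⋃ h ∈ H, (t h : Set I) with hJ'
    have hHc : H.Countable := by
      rw [← Set.countable_coe_iff]
      exact Cardinal.mk_le_aleph0_iff.mp hH
    have hJ'c : J'.Countable := hHc.biUnion fun h _ => (t h).countable_toSet
    set J : Set I := J₀ ∪ J' with hJ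
    refine ⟨⨆ j ∈ J, p j, ⟨J, rfl⟩, ?_, ?_, ?_⟩
    · exact biSup_mono fun i hi => Or.inl hi
    · intro h hh
      have hle : (⨆ i ∈ t h, p i) ≤ ⨆ j ∈ J, p j := by
        refine iSup₂_le fun i hi => ?_
        exact le_iSup₂ (f := fun (j : I) (_ : j ∈ J) => p j) i
          (Or.inr (Set.mem_biUnion hh hi))
      exact hle (ht h)
    · set B := ⨆ j ∈ J', p j with hB
      have hBA : B ≤ ⨆ j ∈ J, p j := biSup_mono fun i hi => Or.inr hi
      set N := Submodule.comap (⨆ j ∈ J, p j).subtype (⨆ j ∈ J₀, p j) with hN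
      let g : B →ₗ[R] (↥(⨆ j ∈ J, p j) ⧸ N) := N.mkQ.comp (Submodule.inclusion hBA)
      have hAsup : (⨆ j ∈ J, p j) = (⨆ j ∈ J₀, p j) ⊔ B := by
        rw [hJ, iSup_union]
      have hg : Function.Surjective g := by
        intro q
        obtain ⟨av, rfl⟩ := N.mkQ_surjective q
        have hav : (av : M) ∈ (⨆ j ∈ J₀, p j) ⊔ B := by rw [← hAsup]; exact av.2
        obtain ⟨x, hx, y, hy, hxy⟩ := Submodule.mem_sup.mp hav
        refine ⟨⟨y, hy⟩, ?_⟩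
        show N.mkQ (Submodule.inclusion hBA ⟨y, hy⟩) = N.mkQ av
        rw [Submodule.mkQ_apply, Submodule.mkQ_apply, Submodule.Quotient.eq]
        have hval : ((Submodule.inclusion hBA ⟨y, hy⟩ : ↥(⨆ j ∈ J, p j)) : M) = y := rfl
        rw [hN, Submodule.mem_comap, Submodule.subtype_apply, AddSubgroupClass.coe_sub,
          hval, ← hxy]
        have h2 : y - (x + y) = -x := by abel
        rw [h2]; exact neg_mem hx
      have hpne : ∀ i : I, ∃ x : M, x ∈ p i ∧ x ≠ 0 := by
        intro i
        by_contra hcon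
        push_neg at hcon
        have hbot : p i = ⊥ := (Submodule.eq_bot_iff _).mpr fun x hx => hcon x hx
        have h1 := hrank i
        rw [hbot] at h1
        simp [rank_bot] at h1
      choose e he1 he2 using hpne
      set E : Set M := ⋃ j ∈ J', {e j} with hE
      have hEc : E.Countable := hJ'c.biUnion fun _ _ => Set.countable_singleton _
      rw [Module.rank_def]
      refine ciSup_le' ?_
      rintro ⟨s, hs⟩
      choose w hw using fun q : s => hg q.1
      have hwli : LinearIndependent R w := by
        apply LinearIndependent.of_comp g
        have hcomp : g ∘ w = ((↑) : s → _) := funext hw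
        rw [hcomp]; exact hs
      have hwM : LinearIndependent R fun q : s => (w q : M) :=
        hwli.map' B.subtype B.ker_subtype
      choose a ha hmem using fun q : s =>
        biSup_scale p hrank e he1 he2 (x := (w q : M)) (w q).2
      have hscaled : LinearIndependent R fun q : s => a q • (w q : M) :=
        smul_linearIndependent hwM a ha
      have hu : LinearIndependent R
          fun q : s => (⟨a q • (w q : M), hmem q⟩ : Submodule.span R E) := by
        apply LinearIndependent.of_comp (Submodule.span R E).subtype
        exact hscaled
      have hcard : #s ≤ Module.rank R (Submodule.span R E) := hu.cardinal_le_rank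
      refine hcard.trans ((rank_span_le E).trans ?_)
      have := hEc.to_subtype
      exact Cardinal.mk_le_aleph0
end

section
/- Let M be a module over a commutative ring, and suppose N_ρ = A_α + (A_{α+1} ∩ M_n) and N_{ρ+1} = A_α + (A_{α+1} ∩ M_{n+1}) where A_α ≤ A_{α+1} and M_n ≤ M_{n+1} are submodules of M. If the inclusion (A_α ∩ M_{n+1}) + (A_{α+1} ∩ M_n) ↪ A_{α+1} ∩ M_{n+1} splits (i.e., the smaller module is a direct summand of the larger), then the inclusion N_ρ ↪ N_{ρ+1} splits. -/
open Cardinal Pointwise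

universe u v

/-- if the inclusion `(Aα ∩ Mn1) + (Aα1 ∩ Mn) ↪ Aα1 ∩ Mn1` splits, then so does
the inclusion `Aα + (Aα1 ∩ Mn) ↪ Aα + (Aα1 ∩ Mn1)`. -/
theorem split_inclusion_transfer {R : Type u} {M : Type v} [CommRing R]
    [AddCommGroup M] [Module R M]
    (Aα Aα1 Mn Mn1 : Submodule R M) (hA : Aα ≤ Aα1) (hM : Mn ≤ Mn1)
    (hsplit : ∃ f : ↥(Aα1 ⊓ Mn1) →ₗ[R] ↥((Aα ⊓ Mn1) ⊔ (Aα1 ⊓ Mn)),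
      ∀ x : ↥((Aα ⊓ Mn1) ⊔ (Aα1 ⊓ Mn)),
        f (Submodule.inclusion
          (sup_le (inf_le_inf hA le_rfl) (inf_le_inf le_rfl hM)) x) = x) :
    ∃ g : ↥(Aα ⊔ (Aα1 ⊓ Mn1)) →ₗ[R] ↥(Aα ⊔ (Aα1 ⊓ Mn)),
      ∀ x : ↥(Aα ⊔ (Aα1 ⊓ Mn)),
        g (Submodule.inclusion (sup_le_sup_left (inf_le_inf le_rfl hM) Aα) x) = x := by
  classical
  obtain ⟨f, hf⟩ := hsplit
  have hBC : (Aα ⊓ Mn1) ⊔ (Aα1 ⊓ Mn) ≤ Aα1 ⊓ Mn1 :=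
    sup_le (inf_le_inf hA le_rfl) (inf_le_inf le_rfl hM)
  set D : Submodule R M := Submodule.map (Aα1 ⊓ Mn1).subtype (LinearMap.ker f) with hDdef
  have hDC : D ≤ Aα1 ⊓ Mn1 := by rintro x ⟨c, _, rfl⟩; exact c.2
  -- B ⊔ D = C
  have hBD : ((Aα ⊓ Mn1) ⊔ (Aα1 ⊓ Mn)) ⊔ D = Aα1 ⊓ Mn1 := by
    refine le_antisymm (sup_le hBC hDC) ?_
    intro x hx
    set c : ↥(Aα1 ⊓ Mn1) := ⟨x, hx⟩ with hc
    have h1 : ((f c : M)) ∈ (Aα ⊓ Mn1) ⊔ (Aα1 ⊓ Mn) := (f c).2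
    have h2 : x - (f c : M) ∈ D := by
      refine ⟨c - Submodule.inclusion hBC (f c), ?_, rfl⟩
      simp only [SetLike.mem_coe, LinearMap.mem_ker, map_sub, hf, sub_self]
    have := Submodule.add_mem_sup h1 h2
    simpa using this
  -- Disjoint B D
  have hBDdisj : Disjoint ((Aα ⊓ Mn1) ⊔ (Aα1 ⊓ Mn)) D := by
    rw [Submodule.disjoint_def]
    rintro x hxB ⟨c, hcker, rfl⟩
    have heq : Submodule.inclusion hBC (⟨(c : M), hxB⟩ : ↥((Aα ⊓ Mn1) ⊔ (Aα1 ⊓ Mn))) = c :=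
      Subtype.ext rfl
    have h0 : (⟨(c : M), hxB⟩ : ↥((Aα ⊓ Mn1) ⊔ (Aα1 ⊓ Mn))) = 0 := by
      rw [← hf ⟨(c : M), hxB⟩, heq, LinearMap.mem_ker.mp hcker]
    exact congrArg Subtype.val h0
  have hN1N2 : Aα ⊔ (Aα1 ⊓ Mn) ≤ Aα ⊔ (Aα1 ⊓ Mn1) :=
    sup_le_sup_left (inf_le_inf le_rfl hM) Aα
  -- N1 ⊔ D = N2
  have hAB : Aα ⊔ ((Aα ⊓ Mn1) ⊔ (Aα1 ⊓ Mn)) = Aα ⊔ (Aα1 ⊓ Mn) := by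
    rw [← sup_assoc, sup_inf_self]
  have hsupN : (Aα ⊔ (Aα1 ⊓ Mn)) ⊔ D = Aα ⊔ (Aα1 ⊓ Mn1) := by
    rw [← hBD, ← sup_assoc, ← hAB, sup_assoc, sup_assoc]
  -- Disjoint N1 D
  have hN1Ddisj : Disjoint (Aα ⊔ (Aα1 ⊓ Mn)) D := by
    rw [Submodule.disjoint_def]
    intro x hxN hxD
    obtain ⟨a, haA, b, hb, rfl⟩ := Submodule.mem_sup.mp hxN
    have hxC : a + b ∈ Aα1 ⊓ Mn1 := hDC hxD
    have hbC : b ∈ Aα1 ⊓ Mn1 := inf_le_inf le_rfl hM hb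
    have haC : a ∈ Aα1 ⊓ Mn1 := by
      have := sub_mem hxC hbC; simpa using this
    have hxB : a + b ∈ (Aα ⊓ Mn1) ⊔ (Aα1 ⊓ Mn) :=
      Submodule.add_mem_sup (Submodule.mem_inf.mpr ⟨haA, haC.2⟩) hb
    exact hBDdisj.le_bot ⟨hxB, hxD⟩
  -- Work inside N2
  set N2 : Submodule R M := Aα ⊔ (Aα1 ⊓ Mn1) with hN2def
  set p : Submodule R ↥N2 := (Aα ⊔ (Aα1 ⊓ Mn)).comap N2.subtype with hpdef
  set q : Submodule R ↥N2 := D.comap N2.subtype with hqdef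
  have hDN2 : D ≤ N2 := le_trans hDC le_sup_right
  have hcompl : IsCompl p q := by
    constructor
    · rw [disjoint_iff, hpdef, hqdef, ← Submodule.comap_inf,
        hN1Ddisj.eq_bot, Submodule.comap_bot, Submodule.ker_subtype]
    · rw [codisjoint_iff, eq_top_iff]
      rintro ⟨x, hx⟩ -
      have : x ∈ (Aα ⊔ (Aα1 ⊓ Mn)) ⊔ D := hsupN ▸ hx
      obtain ⟨a, ha, b, hb, hab⟩ := Submodule.mem_sup.mp this
      refine Submodule.mem_sup.mpr ⟨⟨a, hN1N2 ha⟩, ha, ⟨b, hDN2 hb⟩, hb, ?_⟩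
      exact Subtype.ext hab
  set π := Submodule.linearProjOfIsCompl p q hcompl with hπ
  set e := Submodule.comapSubtypeEquivOfLe (p := Aα ⊔ (Aα1 ⊓ Mn)) (q := N2) hN1N2 with he
  refine ⟨(e : ↥p →ₗ[R] ↥(Aα ⊔ (Aα1 ⊓ Mn))).comp π, ?_⟩
  intro x
  have hmem : Submodule.inclusion hN1N2 x ∈ p := x.2
  have : π (Submodule.inclusion hN1N2 x) = ⟨Submodule.inclusion hN1N2 x, hmem⟩ :=
    Submodule.linearProjOfIsCompl_apply_left hcompl ⟨Submodule.inclusion hN1N2 x, hmem⟩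
  simp only [LinearMap.comp_apply, this]
  exact Subtype.ext rfl
end

section
/- (Hill's theorem, special case of the main result) An abelian group G is free if it is the union of a countable ascending chain 0 = G_0 ≤ G_1 ≤ ... of subgroups, where each G_n is free and pure in G (pure meaning nG ∩ G_n = nG_n for every integer n). -/
open Submodule Set
open scoped Classical

namespace HillAux

variable {M : Type*} [AddCommGroup M]

/-- span of a countable set is countable -/
lemma countable_span {S : Set M} (hS : S.Countable) :
    ((span ℤ S : Submodule ℤ M) : Set M).Countable := by
  haveI := hS.to_subtype
  have : ((span ℤ S : Submodule ℤ M) : Set M) ⊆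
      Set.range (fun p : Σ n : ℕ, (Fin n → ℤ) × (Fin n → S) =>
        ∑ i, p.2.1 i • ((p.2.2 i : M))) := by
    intro x hx
    rcases mem_span_set'.1 hx with ⟨n, f, g, hfg⟩
    exact ⟨⟨n, f, g⟩, by simpa using hfg⟩
  exact (Set.countable_range _).mono this

lemma fg_of_le {N P : Submodule ℤ M} (hN : N.FG) (h : P ≤ N) : P.FG := by
  haveI : Module.Finite ℤ ↥N := Module.Finite.iff_fg.2 hN
  haveI : IsNoetherian ℤ ↥N := isNoetherian_of_isNoetherianRing_of_finite ℤ ↥N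
  have heq : P = Submodule.map N.subtype (Submodule.comap N.subtype P) := by
    rw [Submodule.map_comap_eq, Submodule.range_subtype, inf_eq_right.2 h]
  rw [heq]
  exact (IsNoetherian.noetherian _).map _

/-- `T` is a basis-set for the submodule `p`. -/
def IsBasisSet (T : Set M) (p : Submodule ℤ M) : Prop :=
  LinearIndependent ℤ (fun x : T => (x : M)) ∧ span ℤ T = p

lemma isBasisSet_empty : IsBasisSet (∅ : Set M) (⊥ : Submodule ℤ M) :=
  ⟨linearIndependent_empty_type, by simp⟩

lemma IsBasisSet.union {s t : Set M} {p q : Submodule ℤ M}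
    (hs : IsBasisSet s p) (ht : IsBasisSet t q) (hd : Disjoint p q) :
    IsBasisSet (s ∪ t) (p ⊔ q) := by
  refine ⟨LinearIndepOn.union (v := id) hs.1 ht.1 ?_, by rw [span_union, hs.2, ht.2]⟩
  rw [Set.image_id, Set.image_id, hs.2, ht.2]; exact hd

lemma isBasisSet_iUnion {κ : Type*} [Nonempty κ] {p : κ → Submodule ℤ M} {T : κ → Set M}
    (hdir : Directed (· ⊆ ·) T) (hb : ∀ i, IsBasisSet (T i) (p i)) :
    IsBasisSet (⋃ i, T i) (⨆ i, p i) := by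
  constructor
  · exact linearIndepOn_iUnion_of_directed (v := id) hdir fun i => (hb i).1
  · rw [span_iUnion]
    exact iSup_congr fun i => (hb i).2

lemma free_of_isBasisSet_top {T : Set M} (h : IsBasisSet T ⊤) : Module.Free ℤ M := by
  have hr : Set.range (fun x : T => (x : M)) = T := Subtype.range_coe
  refine Module.Free.of_basis (Module.Basis.mk h.1 ?_)
  rw [hr, h.2]


lemma exists_basisSet_compl {p q : Submodule ℤ M} (hpq : p ≤ q)
    (hfree : Module.Free ℤ (↥q ⧸ (Submodule.comap q.subtype p))) :
    ∃ t : Set M, IsBasisSet t (span ℤ t) ∧ Disjoint p (span ℤ t) ∧ p ⊔ span ℤ t = q := by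
  classical
  set N := Submodule.comap q.subtype p with hN
  obtain ⟨s, hs⟩ := Module.projective_lifting_property N.mkQ LinearMap.id
    (Submodule.Quotient.mk_surjective N)
  have hsec : ∀ y : ↥q ⧸ N, N.mkQ (s y) = y := fun y => congrArg (· y) hs
  set f : (↥q ⧸ N) →ₗ[ℤ] M := q.subtype ∘ₗ s with hf
  have hfinj : Function.Injective f := by
    intro a b hab
    have : (s a : M) = (s b : M) := hab
    have h2 : s a = s b := Subtype.ext this
    rw [← hsec a, ← hsec b, h2]
  set β := Module.Free.chooseBasis ℤ (↥q ⧸ N) with hβ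
  set v : _ → M := fun i => f (β i) with hv
  have hvind : LinearIndependent ℤ v :=
    (β.linearIndependent.map' f (LinearMap.ker_eq_bot.2 hfinj))
  have hspan : span ℤ (Set.range v) = LinearMap.range f := by
    have : Set.range v = f '' (Set.range β) := by
      rw [← Set.range_comp]; rfl
    rw [this, Submodule.span_image, β.span_eq, Submodule.map_top]
  refine ⟨Set.range v, ⟨(linearIndepOn_id_range_iff hvind.injective).2 hvind, rfl⟩, ?_, ?_⟩
  · rw [hspan]
    rw [disjoint_def]
    intro x hxp hxr
    obtain ⟨y, rfl⟩ := hxr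
    have : (s y : M) ∈ p := hxp
    have hyN : s y ∈ N := this
    have : N.mkQ (s y) = 0 := (Submodule.Quotient.mk_eq_zero N).2 hyN
    rw [hsec y] at this
    simp [this, hf]
  · rw [hspan]
    apply le_antisymm
    · refine sup_le hpq ?_
      rintro x ⟨y, rfl⟩
      exact (s y).2
    · intro z hz
      have key : z = ((⟨z, hz⟩ : ↥q) - s (N.mkQ ⟨z, hz⟩) : ↥q) + f (N.mkQ ⟨z, hz⟩) := by
        simp [hf]
      rw [key]
      refine Submodule.add_mem _ (Submodule.mem_sup_left ?_) (Submodule.mem_sup_right ⟨_, rfl⟩)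
      have : ((⟨z, hz⟩ : ↥q) - s (N.mkQ ⟨z, hz⟩)) ∈ N := by
        rw [← Submodule.Quotient.mk_eq_zero N]
        have := hsec (N.mkQ ⟨z, hz⟩)
        simp only [Submodule.mkQ_apply] at this ⊢
        rw [Submodule.Quotient.mk_sub]
        rw [this]
        simp
      exact this


section Generic
variable {M : Type*} [AddCommGroup M]

/-- the set of elements with a nonzero multiple in `S` -/
def divClosure (S : Submodule ℤ M) : Submodule ℤ M where
  carrier := {x | ∃ m : ℤ, m ≠ 0 ∧ m • x ∈ S}
  add_mem' := by
    rintro x y ⟨m, hm, hx⟩ ⟨m', hm', hy⟩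
    refine ⟨m * m', mul_ne_zero hm hm', ?_⟩
    have : (m * m') • (x + y) = m' • (m • x) + m • (m' • y) := by
      rw [smul_add]
      rw [smul_smul, smul_smul, mul_comm m' m]
    rw [this]
    exact Submodule.add_mem _ (Submodule.smul_mem _ _ hx) (Submodule.smul_mem _ _ hy)
  zero_mem' := ⟨1, one_ne_zero, by simp⟩
  smul_mem' := by
    rintro c x ⟨m, hm, hx⟩
    exact ⟨m, hm, by rw [smul_comm]; exact Submodule.smul_mem _ _ hx⟩

lemma mem_divClosure {S : Submodule ℤ M} {x : M} :
    x ∈ divClosure S ↔ ∃ m : ℤ, m ≠ 0 ∧ m • x ∈ S := Iff.rfl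

lemma divClosure_mono {S S' : Submodule ℤ M} (h : S ≤ S') : divClosure S ≤ divClosure S' := by
  rintro x ⟨m, hm, hx⟩; exact ⟨m, hm, h hx⟩

lemma le_divClosure (S : Submodule ℤ M) : S ≤ divClosure S :=
  fun x hx => ⟨1, one_ne_zero, by simpa using hx⟩

/-- Pontryagin-style criterion: a countable torsion-free group which is the union of an
ascending chain of free, divisibly-closed subgroups is free. -/
lemma free_of_countable_chain {H : Type*} [AddCommGroup H] [Countable H]
    [NoZeroSMulDivisors ℤ H]
    (C : ℕ → Submodule ℤ H) (hmono : Monotone C) (hunion : (⨆ n, C n) = ⊤)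
    (hfree : ∀ n, Module.Free ℤ ↥(C n))
    (hdc : ∀ n (m : ℤ), m ≠ 0 → ∀ x : H, m • x ∈ C n → x ∈ C n) :
    Module.Free ℤ H := by
  classical
  obtain ⟨e, he⟩ := exists_surjective_nat H
  set P : ℕ → Submodule ℤ H := fun k => divClosure (span ℤ (e '' Iio k)) with hP
  have hP0 : P 0 = ⊥ := by
    apply le_antisymm _ bot_le
    rintro x ⟨m, hm, hx⟩
    have himg : e '' Iio (0:ℕ) = ∅ := by ext y; simp
    rw [himg, span_empty, Submodule.mem_bot] at hx
    rcases smul_eq_zero.1 hx with h | h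
    · exact absurd (by exact_mod_cast h) hm
    · simpa using h
  have hPmono : Monotone P := fun i j hij =>
    divClosure_mono (span_mono (Set.image_mono (Set.Iio_subset_Iio hij)))
  have hPsup : (⨆ k, P k) = ⊤ := by
    rw [eq_top_iff]
    intro x _
    obtain ⟨k, rfl⟩ := he x
    exact Submodule.mem_iSup_of_mem (k + 1)
      (le_divClosure _ (subset_span ⟨k, by simp, rfl⟩))
  have hPdc : ∀ k (m : ℤ), m ≠ 0 → ∀ x : H, m • x ∈ P k → x ∈ P k := by
    rintro k m hm x ⟨m', hm', hx⟩
    exact ⟨m' * m, mul_ne_zero hm' hm, by rwa [mul_smul]⟩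
  -- each P k is finitely generated
  have hPfg : ∀ k, (P k).FG := by
    intro k
    -- find n with all the generators inside C n
    have : ∃ n, ∀ i < k, e i ∈ C n := by
      induction k with
      | zero => exact ⟨0, fun i hi => absurd hi (by omega)⟩
      | succ k ih =>
        obtain ⟨n, hn⟩ := ih
        have : e k ∈ ⨆ j, C j := hunion ▸ Submodule.mem_top
        obtain ⟨n', hn'⟩ := (Submodule.mem_iSup_of_chain ⟨C, hmono⟩ (e k)).1 this
        refine ⟨max n n', fun i hi => ?_⟩
        rcases Nat.lt_succ_iff_lt_or_eq.1 hi with h | h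
        · exact hmono (le_max_left _ _) (hn i h)
        · exact h ▸ hmono (le_max_right _ _) hn'
    obtain ⟨n, hn⟩ := this
    have hPC : P k ≤ C n := by
      rintro x ⟨m, hm, hx⟩
      refine hdc n m hm x (span_le.2 ?_ hx)
      rintro y ⟨i, hi, rfl⟩
      exact hn i hi
    haveI := hfree n
    set β := Module.Free.chooseBasis ℤ ↥(C n) with hβ
    set Fs : Finset _ := (Finset.range k).biUnion
      (fun i => if h : e i ∈ C n then (β.repr ⟨e i, h⟩).support else ∅) with hFs
    refine fg_of_le (N := Submodule.map (C n).subtype (span ℤ (β '' ↑Fs))) ?_ ?_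
    · exact Submodule.FG.map _ (Submodule.fg_span ((Fs.finite_toSet.image β)))
    · rintro x ⟨m, hm, hx⟩
      have hxC : x ∈ C n := hPC ⟨m, hm, hx⟩
      -- m • x lifted to C n lies in span of basis-restricted coordinates
      have hsub : span ℤ (e '' Iio k) ≤
          Submodule.map (C n).subtype (span ℤ (β '' ↑Fs)) := by
        rw [span_le]
        rintro y ⟨i, hi, rfl⟩
        have hei : e i ∈ C n := hn i hi
        have h' : (⟨e i, hei⟩ : ↥(C n)) ∈ span ℤ (⇑β '' ↑Fs) := by
          rw [Module.Basis.mem_span_image]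
          intro j hj
          simp only [hFs, Finset.coe_biUnion, Finset.coe_sort_coe, Set.mem_iUnion]
          refine ⟨i, by simpa using hi, ?_⟩
          rw [dif_pos hei]
          exact hj
        exact ⟨⟨e i, hei⟩, h', rfl⟩
      have hmx := hsub hx
      obtain ⟨y, hy, hyx⟩ := hmx
      have hxm : (⟨m • x, (C n).smul_mem m hxC⟩ : ↥(C n)) ∈ span ℤ (β '' ↑Fs) := by
        have : (⟨m • x, (C n).smul_mem m hxC⟩ : ↥(C n)) = y := Subtype.ext (by simpa using hyx.symm)
        rwa [this]
      have hxm2 : m • (⟨x, hxC⟩ : ↥(C n)) ∈ span ℤ (β '' ↑Fs) := by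
        have : m • (⟨x, hxC⟩ : ↥(C n)) = ⟨m • x, (C n).smul_mem m hxC⟩ := rfl
        rwa [this]
      have : (⟨x, hxC⟩ : ↥(C n)) ∈ span ℤ (β '' ↑Fs) := by
        rw [Module.Basis.mem_span_image] at hxm2 ⊢
        rwa [map_smul, Finsupp.support_smul_eq hm] at hxm2
      exact ⟨⟨x, hxC⟩, this, rfl⟩
  -- each P k is free and finite
  have hNZD : ∀ (p : Submodule ℤ H), NoZeroSMulDivisors ℤ ↥p := by
    intro p
    constructor
    rintro c x h
    have : c • (x : H) = 0 := by
      rw [← Submodule.coe_smul]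
      exact congrArg _ h
    rcases smul_eq_zero.1 this with h' | h'
    · exact Or.inl h'
    · exact Or.inr (Subtype.ext h')
  have hstep : ∀ k (T : Set H), IsBasisSet T (P k) →
      ∃ T' : Set H, T ⊆ T' ∧ IsBasisSet T' (P (k + 1)) := by
    intro k T hT
    haveI : Module.Finite ℤ ↥(P (k+1)) := Module.Finite.iff_fg.2 (hPfg (k+1))
    haveI : NoZeroSMulDivisors ℤ ↥(P (k+1)) := hNZD _
    set N := Submodule.comap (P (k+1)).subtype (P k) with hNdef
    haveI : Module.Finite ℤ (↥(P (k+1)) ⧸ N) := Module.Finite.quotient ℤ N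
    haveI : NoZeroSMulDivisors ℤ (↥(P (k+1)) ⧸ N) := by
      constructor
      rintro c x h
      by_cases hc : c = 0
      · exact Or.inl hc
      · refine Or.inr ?_
        obtain ⟨y, rfl⟩ := Submodule.Quotient.mk_surjective N x
        have : c • (y : ↥(P (k+1))) ∈ N := by
          rwa [← Submodule.Quotient.mk_eq_zero N, Submodule.Quotient.mk_smul]
        have hy : c • (y : H) ∈ P k := this
        have : (y : H) ∈ P k := hPdc k c hc _ hy
        rw [Submodule.Quotient.mk_eq_zero]
        exact this
    haveI : Module.Free ℤ (↥(P (k+1)) ⧸ N) := Module.free_of_finite_type_torsion_free'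
    obtain ⟨t, ht, hdisj, hsup⟩ := exists_basisSet_compl (hPmono (Nat.le_succ k)) this
    refine ⟨T ∪ t, Set.subset_union_left, ?_⟩
    have := hT.union ht (hT.2 ▸ hdisj)
    rwa [hsup] at this
  -- build the nested bases
  have hbases : ∃ TT : ℕ → Set H, (∀ k, IsBasisSet (TT k) (P k)) ∧ ∀ k, TT k ⊆ TT (k+1) := by
    have base : IsBasisSet (∅ : Set H) (P 0) := hP0 ▸ isBasisSet_empty
    let F : ∀ k : ℕ, {T : Set H // IsBasisSet T (P k)} := fun k =>
      Nat.rec ⟨∅, base⟩ (fun k ih =>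
        ⟨(hstep k ih.1 ih.2).choose, (hstep k ih.1 ih.2).choose_spec.2⟩) k
    refine ⟨fun k => (F k).1, fun k => (F k).2, fun k => ?_⟩
    exact (hstep k (F k).1 (F k).2).choose_spec.1
  obtain ⟨TT, hTT, hTTmono⟩ := hbases
  have hTTm : ∀ i j, i ≤ j → TT i ⊆ TT j := by
    intro i j hij
    induction j with
    | zero => simp_all
    | succ j ih =>
      rcases Nat.le_succ_iff.1 hij with h | h
      · exact (ih h).trans (hTTmono j)
      · exact h ▸ subset_rfl
  have : IsBasisSet (⋃ k, TT k) (⨆ k, P k) := by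
    refine isBasisSet_iUnion ?_ hTT
    intro i j
    exact ⟨max i j, hTTm _ _ (le_max_left _ _), hTTm _ _ (le_max_right _ _)⟩
  rw [hPsup] at this
  exact free_of_isBasisSet_top this

end Generic

variable {G : Type*} [AddCommGroup G] (A : ℕ → Submodule ℤ G)
  [hfr : ∀ n, Module.Free ℤ ↥(A n)]

/-- index type for the chosen basis of `A n` -/
abbrev BIdx (n : ℕ) : Type _ := Module.Free.ChooseBasisIndex ℤ ↥(A n)

noncomputable def bb (n : ℕ) : Module.Basis (BIdx A n) ℤ ↥(A n) := Module.Free.chooseBasis ℤ ↥(A n)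

noncomputable def xx (n : ℕ) (i : BIdx A n) : G := ((bb A n i : ↥(A n)) : G)

/-- span in `G` of a subset of the chosen basis of `A n` -/
noncomputable def sp (n : ℕ) (S : Set (BIdx A n)) : Submodule ℤ G := span ℤ (xx A n '' S)

lemma sp_le (n : ℕ) (S : Set (BIdx A n)) : sp A n S ≤ A n := by
  rw [sp, span_le]
  rintro y ⟨i, _, rfl⟩
  exact (bb A n i).2

lemma sp_mono (n : ℕ) {S T : Set (BIdx A n)} (h : S ⊆ T) : sp A n S ≤ sp A n T :=
  span_mono (Set.image_mono h)

lemma sp_union (n : ℕ) (S T : Set (BIdx A n)) :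
    sp A n (S ∪ T) = sp A n S ⊔ sp A n T := by
  rw [sp, Set.image_union, span_union]; rfl

lemma sp_eq_map (n : ℕ) (S : Set (BIdx A n)) :
    sp A n S = Submodule.map (A n).subtype (span ℤ (bb A n '' S)) := by
  rw [sp, ← Submodule.span_image]
  congr 1
  rw [← Set.image_comp]
  rfl

lemma mem_sp_iff {n : ℕ} {S : Set (BIdx A n)} {g : G} (hg : g ∈ A n) :
    g ∈ sp A n S ↔ ↑((bb A n).repr ⟨g, hg⟩).support ⊆ S := by
  rw [sp_eq_map, ← Module.Basis.mem_span_image (b := bb A n)]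
  constructor
  · rintro ⟨y, hy, hyg⟩
    have : y = (⟨g, hg⟩ : ↥(A n)) := Subtype.ext hyg
    rwa [this] at hy
  · intro h
    exact ⟨⟨g, hg⟩, h, rfl⟩

lemma mem_sp_supp {n : ℕ} {g : G} (hg : g ∈ A n) :
    g ∈ sp A n (↑((bb A n).repr ⟨g, hg⟩).support) := by
  rw [mem_sp_iff A hg]

lemma sp_dc {n : ℕ} {S : Set (BIdx A n)} {m : ℤ} (hm : m ≠ 0) {g : G} (hg : g ∈ A n)
    (h : m • g ∈ sp A n S) : g ∈ sp A n S := by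
  have hmg : m • g ∈ A n := (A n).smul_mem m hg
  rw [mem_sp_iff A hmg] at h
  rw [mem_sp_iff A hg]
  have : (⟨m • g, hmg⟩ : ↥(A n)) = m • (⟨g, hg⟩ : ↥(A n)) := rfl
  rw [this, map_smul, Finsupp.support_smul_eq hm] at h
  exact h

lemma sp_disjoint {n : ℕ} {S T : Set (BIdx A n)} (h : S ∩ T ⊆ ∅) :
    Disjoint (sp A n S) (sp A n T) := by
  rw [disjoint_def]
  intro x hxS hxT
  have hxA : x ∈ A n := sp_le A n S hxS
  rw [mem_sp_iff A hxA] at hxS hxT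
  have hsupp : ((bb A n).repr ⟨x, hxA⟩).support = ∅ := by
    rw [← Finset.coe_eq_empty, ← Set.subset_empty_iff]
    exact fun i hi => h ⟨hxS hi, hxT hi⟩
  have : (bb A n).repr ⟨x, hxA⟩ = 0 := Finsupp.support_eq_empty.1 hsupp
  have hx0 : (⟨x, hxA⟩ : ↥(A n)) = 0 := by
    have := congrArg ((bb A n).repr.symm) this
    simpa using this
  simpa using congrArg (Subtype.val) hx0

/-- linear independence of the image in `G` of a subset of the basis of `A n` -/
lemma sp_indep (n : ℕ) (S : Set (BIdx A n)) :
    LinearIndependent ℤ (fun i : S => xx A n i) := by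
  have h1 : LinearIndependent ℤ (fun i : S => bb A n i) :=
    (bb A n).linearIndependent.comp (fun i : S => (i : BIdx A n)) Subtype.coe_injective
  exact h1.map' (A n).subtype (Submodule.ker_subtype _)

/-- `sp A n S` is free -/
lemma sp_free (n : ℕ) (S : Set (BIdx A n)) : Module.Free ℤ ↥(sp A n S) := by
  have : sp A n S = span ℤ (Set.range fun i : S => xx A n i) := by
    rw [sp]
    congr 1
    exact (Set.image_eq_range _ _)
  rw [this]
  exact Module.Free.of_basis (Module.Basis.span (sp_indep A n S))


noncomputable def BB (Y : ∀ n, Set (BIdx A n)) : Submodule ℤ G := ⨆ n, sp A n (Y n)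

def Adequate (Y : ∀ n, Set (BIdx A n)) : Prop :=
  (∀ n, BB A Y ⊓ A n = sp A n (Y n)) ∧
  (∀ n (m : ℤ), m ≠ 0 → ∀ x : G, m • x ∈ BB A Y ⊔ A n → x ∈ BB A Y ⊔ A n)

lemma sp_le_BB (Y : ∀ n, Set (BIdx A n)) (n : ℕ) : sp A n (Y n) ≤ BB A Y :=
  le_iSup (fun k => sp A k (Y k)) n

lemma BB_mono {Y Y' : ∀ n, Set (BIdx A n)} (h : ∀ n, Y n ⊆ Y' n) : BB A Y ≤ BB A Y' :=
  iSup_mono fun n => sp_mono A n (h n)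

section gadgets

variable (B : Submodule ℤ G)

noncomputable def rep1 (n : ℕ) (w : G) : G :=
  if h : ∃ r : G, r ∈ A n ∧ r - w ∈ B then h.choose else 0

lemma rep1_spec {n : ℕ} {w : G} (h : ∃ r : G, r ∈ A n ∧ r - w ∈ B) :
    rep1 A B n w ∈ A n ∧ rep1 A B n w - w ∈ B := by
  rw [rep1, dif_pos h]
  exact h.choose_spec

noncomputable def supp1 (n : ℕ) (w : G) : Set (BIdx A n) :=
  if h : rep1 A B n w ∈ A n then ↑(((bb A n).repr ⟨rep1 A B n w, h⟩).support) else ∅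

lemma supp1_countable (n : ℕ) (w : G) : (supp1 A B n w).Countable := by
  rw [supp1]
  split
  · exact (Finset.countable_toSet _)
  · exact countable_empty

lemma supp1_spec {n : ℕ} {w : G} (h : rep1 A B n w ∈ A n) :
    rep1 A B n w ∈ sp A n (supp1 A B n w) := by
  rw [supp1, dif_pos h]
  exact mem_sp_supp A h

noncomputable def rep2 (n : ℕ) (m : ℤ) (w : G) : G :=
  if h : ∃ x : G, m • x - w ∈ B ⊔ A n then h.choose else 0

lemma rep2_spec {n : ℕ} {m : ℤ} {w : G} (h : ∃ x : G, m • x - w ∈ B ⊔ A n) :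
    m • rep2 A B n m w - w ∈ B ⊔ A n := by
  rw [rep2, dif_pos h]
  exact h.choose_spec

noncomputable def QQ (g : G) : ℕ → Set G := fun t =>
  Nat.rec ({g} : Set G)
    (fun _ Qt => Qt ∪ ⋃ (n : ℕ), ⋃ (w : G), ⋃ (_ : w ∈ (span ℤ Qt : Submodule ℤ G)),
      ((xx A n '' supp1 A B n w) ∪ Set.range (fun m : ℤ => rep2 A B n m w))) t

lemma QQ_succ (g : G) (t : ℕ) :
    QQ A B g (t + 1) = QQ A B g t ∪
      ⋃ (n : ℕ), ⋃ (w : G), ⋃ (_ : w ∈ (span ℤ (QQ A B g t) : Submodule ℤ G)),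
      ((xx A n '' supp1 A B n w) ∪ Set.range (fun m : ℤ => rep2 A B n m w)) := rfl

lemma QQ_countable (g : G) (t : ℕ) : (QQ A B g t).Countable := by
  induction t with
  | zero => exact countable_singleton g
  | succ t ih =>
    rw [QQ_succ]
    refine ih.union (countable_iUnion fun n => ?_)
    have hsc : ((span ℤ (QQ A B g t) : Submodule ℤ G) : Set G).Countable :=
      countable_span ih
    exact Set.Countable.biUnion hsc fun w _ =>
      ((supp1_countable A B n w).image _).union (countable_range _)

lemma QQ_mono (g : G) : Monotone (QQ A B g) := by
  apply monotone_nat_of_le_succ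
  intro t
  rw [QQ_succ]
  exact Set.subset_union_left

lemma mem_span_QQ {g x : G} (h : x ∈ span ℤ (⋃ t, QQ A B g t)) :
    ∃ t, x ∈ span ℤ (QQ A B g t) := by
  rw [span_iUnion] at h
  exact (Submodule.mem_iSup_of_chain
    ⟨fun t => span ℤ (QQ A B g t), fun i j hij => span_mono (QQ_mono A B g hij)⟩ x).1 h

end gadgets

/-- The extension lemma: an adequate system can be extended by one element of `G`,
at the cost of a countable extension. -/
lemma adequate_extend (hex : ∀ x : G, ∃ n, x ∈ A n)
    {Y : ∀ n, Set (BIdx A n)} (hY : Adequate A Y) (g : G) :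
    ∃ Y' : ∀ n, Set (BIdx A n), Adequate A Y' ∧ (∀ n, Y n ⊆ Y' n) ∧ g ∈ BB A Y' ∧
      ∃ Q : Set G, Q.Countable ∧ span ℤ Q ≤ BB A Y' ∧ BB A Y' ≤ BB A Y ⊔ span ℤ Q := by
  classical
  have memA : ∀ x : G, ∃ n, x ∈ A n := hex
  set B := BB A Y with hB
  set Qω : Set G := ⋃ t, QQ A B g t with hQω
  set Y' : ∀ n, Set (BIdx A n) :=
    fun n => Y n ∪ ⋃ (w : G), ⋃ (_ : w ∈ (span ℤ Qω : Submodule ℤ G)), supp1 A B n w with hY'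
  have hYY' : ∀ n, Y n ⊆ Y' n := fun n => Set.subset_union_left
  have hBle : B ≤ BB A Y' := BB_mono A hYY'
  have hsupp_sub : ∀ n (w : G), w ∈ span ℤ Qω → supp1 A B n w ⊆ Y' n := by
    intro n w hw
    refine Set.subset_union_of_subset_right ?_ _
    exact Set.subset_iUnion₂ (s := fun w _ => supp1 A B n w) w hw
  -- every element of span Qω is in BB Y'
  have hQBB : ∀ w : G, w ∈ span ℤ Qω → w ∈ BB A Y' := by
    intro w hw
    obtain ⟨n, hn⟩ := memA w
    have hdef : ∃ r : G, r ∈ A n ∧ r - w ∈ B := ⟨w, hn, by simp⟩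
    obtain ⟨h1, h2⟩ := rep1_spec A B hdef
    have hr : rep1 A B n w ∈ sp A n (Y' n) :=
      sp_mono A n (hsupp_sub n w hw) (supp1_spec A B h1)
    have : w = rep1 A B n w - (rep1 A B n w - w) := by abel
    rw [this]
    exact Submodule.sub_mem _ (sp_le_BB A Y' n hr) (hBle h2)
  -- BB Y' is contained in B ⊔ span Qω
  have hBB_le : BB A Y' ≤ B ⊔ span ℤ Qω := by
    refine iSup_le fun n => ?_
    rw [hY', sp_union]
    refine sup_le (le_trans (sp_le_BB A Y n) le_sup_left) ?_
    rw [sp]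
    rw [span_le]
    rintro y ⟨i, hi, rfl⟩
    simp only [Set.mem_iUnion] at hi
    obtain ⟨w, hw, hiw⟩ := hi
    obtain ⟨t, ht⟩ := mem_span_QQ A B (hQω ▸ hw)
    have : xx A n i ∈ QQ A B g (t+1) := by
      rw [QQ_succ]
      refine Set.mem_union_right _ ?_
      refine Set.mem_iUnion.2 ⟨n, Set.mem_iUnion.2 ⟨w, Set.mem_iUnion.2 ⟨ht, ?_⟩⟩⟩
      exact Set.mem_union_left _ ⟨i, hiw, rfl⟩
    refine le_sup_right (a := B) ?_
    exact subset_span (Set.mem_iUnion.2 ⟨t+1, this⟩)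
  refine ⟨Y', ⟨?_, ?_⟩, hYY', ?_, Qω, countable_iUnion (QQ_countable A B g), ?_, ?_⟩
  · -- adequacy (i)
    intro n
    apply le_antisymm
    · intro x hx
      obtain ⟨hxB, hxA⟩ := hx
      have := hBB_le hxB
      rw [Submodule.mem_sup] at this
      obtain ⟨b, hb, w, hw, rfl⟩ := this
      have hdef : ∃ r : G, r ∈ A n ∧ r - w ∈ B := ⟨b + w, hxA, by simpa using hb⟩
      obtain ⟨h1, h2⟩ := rep1_spec A B hdef
      have hr : rep1 A B n w ∈ sp A n (Y' n) :=
        sp_mono A n (hsupp_sub n w hw) (supp1_spec A B h1)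
      have hxr : b + w - rep1 A B n w ∈ B ⊓ A n := by
        constructor
        · have : b + w - rep1 A B n w = b - (rep1 A B n w - w) := by abel
          rw [this]
          exact Submodule.sub_mem _ hb h2
        · exact Submodule.sub_mem _ hxA h1
      rw [hY.1 n] at hxr
      have : b + w = (b + w - rep1 A B n w) + rep1 A B n w := by abel
      rw [this]
      exact Submodule.add_mem _ (sp_mono A n (hYY' n) hxr) hr
    · exact le_inf (sp_le_BB A Y' n) (sp_le A n _)
  · -- adequacy (ii)
    intro n m hm x hx
    have : m • x ∈ (B ⊔ A n) ⊔ span ℤ Qω := by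
      have h1 : BB A Y' ⊔ A n ≤ (B ⊔ span ℤ Qω) ⊔ A n := sup_le_sup_right hBB_le _
      have h2 : (B ⊔ span ℤ Qω) ⊔ A n = (B ⊔ A n) ⊔ span ℤ Qω := by
        rw [sup_assoc, sup_assoc, sup_comm (span ℤ Qω) (A n)]
      exact h2 ▸ h1 hx
    rw [Submodule.mem_sup] at this
    obtain ⟨c, hc, w, hw, hcw⟩ := this
    obtain ⟨t, ht⟩ := mem_span_QQ A B (hQω ▸ hw)
    have hdef : ∃ z : G, m • z - w ∈ B ⊔ A n := ⟨x, by rw [← hcw]; simpa using hc⟩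
    have hρspec := rep2_spec A B hdef
    set ρ := rep2 A B n m w with hρ
    have hρQ : ρ ∈ Qω := by
      refine Set.mem_iUnion.2 ⟨t+1, ?_⟩
      rw [QQ_succ]
      refine Set.mem_union_right _ ?_
      refine Set.mem_iUnion.2 ⟨n, Set.mem_iUnion.2 ⟨w, Set.mem_iUnion.2 ⟨ht, ?_⟩⟩⟩
      exact Set.mem_union_right _ ⟨m, rfl⟩
    have hρBB : ρ ∈ BB A Y' := hQBB ρ (subset_span hρQ)
    have hxρ : m • (x - ρ) ∈ B ⊔ A n := by
      have : m • (x - ρ) = (m • x - w) - (m • ρ - w) := by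
        rw [smul_sub]; abel
      rw [this]
      refine Submodule.sub_mem _ ?_ hρspec
      rw [← hcw]; simpa using hc
    have := hY.2 n m hm (x - ρ) hxρ
    have hxρ2 : x - ρ ∈ BB A Y' ⊔ A n := by
      refine sup_le_sup_right hBle _ ?_
      exact this
    have : x = (x - ρ) + ρ := by abel
    rw [this]
    exact Submodule.add_mem _ hxρ2 (le_sup_left (b := A n) hρBB)
  · -- g ∈ BB Y'
    refine hQBB g (subset_span ?_)
    exact Set.mem_iUnion.2 ⟨0, rfl⟩
  · exact fun w hw => hQBB w hw
  · exact hBB_le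


/-- `BB A Y` is divisibly closed in `G` whenever `Y` is adequate. -/
lemma BB_dc (hex : ∀ x : G, ∃ n, x ∈ A n) {Y : ∀ n, Set (BIdx A n)} (hY : Adequate A Y)
    {m : ℤ} (hm : m ≠ 0) {x : G} (h : m • x ∈ BB A Y) : x ∈ BB A Y := by
  obtain ⟨n, hn⟩ := hex x
  have h1 : m • x ∈ BB A Y ⊓ A n := ⟨h, (A n).smul_mem m hn⟩
  rw [hY.1 n] at h1
  exact sp_le_BB A Y n (sp_dc A hm hn h1)

/-- The key freeness lemma: if `Y ≤ Y'` are both adequate and `BB A Y'` is a countable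
extension of `BB A Y`, then the quotient `BB A Y' / BB A Y` is free. -/
lemma quotient_free (hmono : Monotone A) (hex : ∀ x : G, ∃ n, x ∈ A n)
    {Y Y' : ∀ n, Set (BIdx A n)} (hY : Adequate A Y) (hY' : Adequate A Y')
    (hYY' : ∀ n, Y n ⊆ Y' n)
    {Q : Set G} (hQc : Q.Countable) (hQle : span ℤ Q ≤ BB A Y')
    (hle : BB A Y' ≤ BB A Y ⊔ span ℤ Q) :
    Module.Free ℤ (↥(BB A Y') ⧸ (Submodule.comap (BB A Y').subtype (BB A Y))) := by
  set B := BB A Y with hB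
  set B' := BB A Y' with hB'
  have hBB' : B ≤ B' := BB_mono A hYY'
  set N := Submodule.comap B'.subtype B with hN
  -- B is divisibly closed in G
  have hdcB : ∀ (m : ℤ), m ≠ 0 → ∀ x : G, m • x ∈ B → x ∈ B :=
    fun m hm x h => BB_dc A hex hY hm h
  -- countability
  haveI : Countable ↥(span ℤ Q) := (countable_span hQc).to_subtype
  have hsurj : Function.Surjective
      (fun q : ↥(span ℤ Q) => N.mkQ ⟨(q : G), hQle q.2⟩) := by
    intro h
    obtain ⟨⟨z, hz⟩, rfl⟩ := Submodule.Quotient.mk_surjective N h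
    have := hle hz
    rw [Submodule.mem_sup] at this
    obtain ⟨b, hb, w, hw, rfl⟩ := this
    refine ⟨⟨w, hw⟩, ?_⟩
    simp only [Submodule.mkQ_apply]
    rw [Submodule.Quotient.eq]
    show (⟨w, _⟩ : ↥B') - ⟨b + w, hz⟩ ∈ N
    have : (⟨w, hQle hw⟩ : ↥B') - ⟨b + w, hz⟩ = ⟨-b, by
      exact Submodule.neg_mem _ (hBB' hb)⟩ := by
      apply Subtype.ext
      show w - (b + w) = -b
      abel
    rw [this]
    show -b ∈ B
    exact Submodule.neg_mem _ hb
  haveI : Countable (↥B' ⧸ N) := hsurj.countable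
  -- torsion-freeness of the quotient
  haveI : NoZeroSMulDivisors ℤ (↥B' ⧸ N) := by
    constructor
    rintro c x h
    by_cases hc : c = 0
    · exact Or.inl hc
    · refine Or.inr ?_
      obtain ⟨y, rfl⟩ := Submodule.Quotient.mk_surjective N x
      have : c • y ∈ N := by
        rwa [← Submodule.Quotient.mk_eq_zero N, Submodule.Quotient.mk_smul]
      have hy : c • (y : G) ∈ B := this
      have : (y : G) ∈ B := hdcB c hc _ hy
      rw [Submodule.Quotient.mk_eq_zero]
      exact this
  -- the chain in the quotient
  set C : ℕ → Submodule ℤ (↥B' ⧸ N) :=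
    fun n => Submodule.map N.mkQ (Submodule.comap B'.subtype (sp A n (Y' n))) with hC
  have hspY' : ∀ n, B' ⊓ A n = sp A n (Y' n) := hY'.1
  have hCmono : Monotone C := by
    intro i j hij
    refine Submodule.map_mono (Submodule.comap_mono ?_)
    rw [← hspY' i, ← hspY' j]
    exact inf_le_inf_left _ (hmono hij)
  have hCunion : (⨆ n, C n) = ⊤ := by
    rw [eq_top_iff]
    rintro x -
    obtain ⟨⟨z, hz⟩, rfl⟩ := Submodule.Quotient.mk_surjective N x
    obtain ⟨n, hn⟩ := hex z
    have : z ∈ sp A n (Y' n) := by rw [← hspY' n]; exact ⟨hz, hn⟩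
    exact Submodule.mem_iSup_of_mem n ⟨⟨z, hz⟩, this, rfl⟩
  have hCfree : ∀ n, Module.Free ℤ ↥(C n) := by
    intro n
    set D := sp A n (Y' n \ Y n) with hD
    have hDB' : D ≤ B' :=
      le_trans (sp_mono A n (Set.diff_subset)) (sp_le_BB A Y' n)
    set f : ↥D →ₗ[ℤ] (↥B' ⧸ N) := N.mkQ ∘ₗ Submodule.inclusion hDB' with hf
    have hinj : Function.Injective f := by
      rw [← LinearMap.ker_eq_bot, eq_bot_iff]
      rintro ⟨d, hd⟩ hker
      have : d ∈ B := by
        have h0 : f ⟨d, hd⟩ = 0 := hker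
        rw [hf, LinearMap.comp_apply, Submodule.mkQ_apply,
          Submodule.Quotient.mk_eq_zero] at h0
        exact h0
      have hdA : d ∈ A n := sp_le A n _ hd
      have h2 : d ∈ sp A n (Y n) := by
        rw [← hY.1 n]
        exact ⟨this, hdA⟩
      have h3 := sp_disjoint A (T := Y' n \ Y n) (S := Y n)
        (by intro i hi; exact absurd hi.1 hi.2.2)
      have : d = 0 := (disjoint_def.1 h3) d h2 hd
      simp [this]
    have hrange : LinearMap.range f = C n := by
      apply le_antisymm
      · rintro x ⟨⟨d, hd⟩, rfl⟩
        refine ⟨⟨d, hDB' hd⟩, sp_mono A n (Set.diff_subset) hd, rfl⟩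
      · rintro x ⟨⟨z, hz⟩, hzsp, rfl⟩
        have hz' : z ∈ sp A n (Y n ∪ (Y' n \ Y n)) := by
          rwa [Set.union_diff_cancel (hYY' n)]
        rw [sp_union, Submodule.mem_sup] at hz'
        obtain ⟨u, hu, d, hd, rfl⟩ := hz'
        refine ⟨⟨d, hd⟩, ?_⟩
        rw [hf]
        simp only [LinearMap.comp_apply, Submodule.mkQ_apply]
        rw [Submodule.Quotient.eq]
        show Submodule.inclusion hDB' ⟨d, hd⟩ - ⟨u + d, hz⟩ ∈ N
        show (Submodule.inclusion hDB' ⟨d, hd⟩ - ⟨u + d, hz⟩ : ↥B') ∈ N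
        have heq : (Submodule.inclusion hDB' ⟨d, hd⟩ - ⟨u + d, hz⟩ : ↥B') =
            ⟨-u, Submodule.neg_mem _ (hBB' (sp_le_BB A Y n (by
              have : u ∈ sp A n (Y n) := hu
              exact this)))⟩ := by
          apply Subtype.ext
          show d - (u + d) = -u
          abel
        rw [heq]
        show -u ∈ B
        exact Submodule.neg_mem _ (sp_le_BB A Y n hu)
    haveI : Module.Free ℤ ↥D := sp_free A n _
    have := Module.Free.of_equiv (LinearEquiv.ofInjective f hinj)
    rw [hrange] at this
    exact this
  have hCdc : ∀ n (m : ℤ), m ≠ 0 → ∀ x : ↥B' ⧸ N, m • x ∈ C n → x ∈ C n := by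
    intro n m hm x hx
    obtain ⟨⟨z, hz⟩, rfl⟩ := Submodule.Quotient.mk_surjective N x
    obtain ⟨⟨y, hy⟩, hysp, hyx⟩ := hx
    -- m • z - y ∈ B
    have hzy : m • z - y ∈ B := by
      have : Submodule.Quotient.mk (p := N) (⟨y, hy⟩ : ↥B') =
          Submodule.Quotient.mk ⟨m • z, Submodule.smul_mem _ m hz⟩ := by
        rw [← Submodule.Quotient.mk_smul] at hyx
        exact hyx
      rw [Submodule.Quotient.eq] at this
      have h2 : (⟨y, hy⟩ : ↥B') - ⟨m • z, _⟩ ∈ N := this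
      have h3 : y - m • z ∈ B := h2
      have := Submodule.neg_mem _ h3
      rwa [neg_sub] at this
    have hmz : m • z ∈ B ⊔ A n := by
      have : m • z = (m • z - y) + y := by abel
      rw [this]
      exact Submodule.add_mem _ (Submodule.mem_sup_left hzy)
        (Submodule.mem_sup_right (sp_le A n _ hysp))
    have hzB : z ∈ B ⊔ A n := hY.2 n m hm z hmz
    -- modularity
    have hmod : (B ⊔ A n) ⊓ B' = B ⊔ (A n ⊓ B') := sup_inf_assoc_of_le _ hBB'
    have hz2 : z ∈ B ⊔ (A n ⊓ B') := by rw [← hmod]; exact ⟨hzB, hz⟩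
    rw [inf_comm, hspY' n] at hz2
    rw [Submodule.mem_sup] at hz2
    obtain ⟨b, hb, u, hu, rfl⟩ := hz2
    refine ⟨⟨u, sp_le_BB A Y' n hu⟩, hu, ?_⟩
    simp only [Submodule.mkQ_apply]
    rw [Submodule.Quotient.eq]
    show (⟨u, _⟩ : ↥B') - ⟨b + u, hz⟩ ∈ N
    have heq : ((⟨u, sp_le_BB A Y' n hu⟩ : ↥B') - ⟨b + u, hz⟩ : ↥B') =
        ⟨-b, Submodule.neg_mem _ (hBB' hb)⟩ := by
      apply Subtype.ext
      show u - (b + u) = -b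
      abel
    rw [heq]
    show -b ∈ B
    exact Submodule.neg_mem _ hb
  exact free_of_countable_chain C hCmono hCunion hCfree hCdc


/-- The master lemma in submodule language. -/
theorem hill_main (hmono : Monotone A) (hex : ∀ x : G, ∃ n, x ∈ A n)
    (hdc : ∀ k (m : ℤ), m ≠ 0 → ∀ x : G, m • x ∈ A k → x ∈ A k) :
    Module.Free ℤ G := by
  classical
  -- the Zorn poset
  set PP := ((∀ n, Set (BIdx A n)) × Set G) with hPP
  set GoodSet : Set PP := {p | Adequate A p.1 ∧ IsBasisSet p.2 (BB A p.1)} with hGood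
  -- the seed
  have hsp_empty : ∀ n, sp A n (∅ : Set (BIdx A n)) = ⊥ := by
    intro n; rw [sp]; simp
  have hBB0 : BB A (fun _ => ∅) = ⊥ := by
    rw [BB]
    simp [hsp_empty]
  have hseed : ((fun _ => ∅, ∅) : PP) ∈ GoodSet := by
    refine ⟨⟨?_, ?_⟩, ?_⟩
    · intro n
      rw [hBB0, hsp_empty, bot_inf_eq]
    · intro n m hm x hx
      rw [hBB0, bot_sup_eq] at hx ⊢
      exact hdc n m hm x hx
    · rw [hBB0]
      exact isBasisSet_empty
  -- chains have upper bounds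
  have hchain : ∀ c ⊆ GoodSet, IsChain (· ≤ ·) c → ∀ y ∈ c,
      ∃ ub ∈ GoodSet, ∀ z ∈ c, z ≤ ub := by
    intro c hcsub hc y hyc
    haveI : Nonempty ↥c := ⟨⟨y, hyc⟩⟩
    set Yub : ∀ n, Set (BIdx A n) := fun n => ⋃ p : c, (p : PP).1 n with hYub
    set Tub : Set G := ⋃ p : c, (p : PP).2 with hTub
    have hBBub : BB A Yub = ⨆ p : c, BB A (p : PP).1 := by
      rw [BB]
      have : ∀ n, sp A n (Yub n) = ⨆ p : c, sp A n ((p : PP).1 n) := by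
        intro n
        rw [hYub, sp, Set.image_iUnion, span_iUnion]
        rfl
      simp_rw [this]
      rw [iSup_comm]
      rfl
    have hdirBB : Directed (· ≤ ·) (fun p : c => BB A (p : PP).1) := by
      intro p q
      rcases hc.total p.2 q.2 with h | h
      · exact ⟨q, BB_mono A (fun n => h.1 n), le_rfl⟩
      · exact ⟨p, le_rfl, BB_mono A (fun n => h.1 n)⟩
    have hmemBB : ∀ x : G, x ∈ BB A Yub → ∃ p : c, x ∈ BB A (p : PP).1 := by
      intro x hx
      rw [hBBub] at hx
      exact (Submodule.mem_iSup_of_directed _ hdirBB).1 hx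
    have hubGood : ((Yub, Tub) : PP) ∈ GoodSet := by
      refine ⟨⟨?_, ?_⟩, ?_⟩
      · intro n
        apply le_antisymm
        · rintro x ⟨hx1, hx2⟩
          obtain ⟨p, hp⟩ := hmemBB x hx1
          have hpG := hcsub p.2
          have : x ∈ sp A n ((p : PP).1 n) := by
            rw [← hpG.1.1 n]
            exact ⟨hp, hx2⟩
          exact sp_mono A n (Set.subset_iUnion (fun q : c => (q : PP).1 n) p) this
        · exact le_inf (sp_le_BB A Yub n) (sp_le A n _)
      · intro n m hm x hx
        have hsupeq : BB A Yub ⊔ A n = ⨆ p : c, (BB A (p : PP).1 ⊔ A n) := by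
          apply le_antisymm
          · refine sup_le ?_ ?_
            · rw [hBBub]
              exact iSup_le fun p => le_iSup_of_le p le_sup_left
            · exact le_iSup_of_le (Classical.arbitrary ↥c) le_sup_right
          · refine iSup_le fun p => sup_le_sup_right ?_ _
            rw [hBBub]
            exact le_iSup (fun p : c => BB A (p : PP).1) p
        rw [hsupeq] at hx ⊢
        have hdir2 : Directed (· ≤ ·) (fun p : c => BB A (p : PP).1 ⊔ A n) := by
          intro p q
          obtain ⟨r, h1, h2⟩ := hdirBB p q
          exact ⟨r, sup_le_sup_right h1 _, sup_le_sup_right h2 _⟩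
        obtain ⟨p, hp⟩ := (Submodule.mem_iSup_of_directed _ hdir2).1 hx
        have := (hcsub p.2).1.2 n m hm x hp
        exact (Submodule.mem_iSup_of_directed _ hdir2).2 ⟨p, this⟩
      · have := isBasisSet_iUnion (κ := ↥c) (p := fun p => BB A (p : PP).1)
          (T := fun p => (p : PP).2) ?_ ?_
        · rw [← hBBub] at this
          exact this
        · intro p q
          rcases hc.total p.2 q.2 with h | h
          · exact ⟨q, h.2, le_rfl⟩
          · exact ⟨p, le_rfl, h.2⟩
        · exact fun p => (hcsub p.2).2
    refine ⟨(Yub, Tub), hubGood, ?_⟩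
    intro z hz
    constructor
    · intro n
      exact Set.subset_iUnion (fun p : c => (p : PP).1 n) ⟨z, hz⟩
    · exact Set.subset_iUnion (fun p : c => (p : PP).2) ⟨z, hz⟩
  obtain ⟨mx, -, hmx⟩ := zorn_le_nonempty₀ GoodSet hchain _ hseed
  obtain ⟨hmxAd, hmxBasis⟩ := hmx.1
  -- the maximal element is everything
  have htop : BB A mx.1 = ⊤ := by
    by_contra htop
    have : ∃ g : G, g ∉ BB A mx.1 := by
      by_contra h
      push_neg at h
      exact htop (eq_top_iff'.2 h)
    obtain ⟨g, hg⟩ := this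
    obtain ⟨Y', hY', hYY', hgY', Q, hQc, hQle, hle⟩ := adequate_extend A hex hmxAd g
    have hfreeq := quotient_free A hmono hex hmxAd hY' hYY' hQc hQle hle
    obtain ⟨t, ht, hdisj, hsup⟩ := exists_basisSet_compl (BB_mono A hYY') hfreeq
    have hnewBasis : IsBasisSet (mx.2 ∪ t) (BB A Y') := by
      have := hmxBasis.union ht hdisj
      rwa [hsup] at this
    have hnewGood : ((Y', mx.2 ∪ t) : PP) ∈ GoodSet := ⟨hY', hnewBasis⟩
    have hlenew : mx ≤ (Y', mx.2 ∪ t) := by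
      constructor
      · intro n
        exact hYY' n
      · exact Set.subset_union_left
    have := hmx.2 hnewGood hlenew
    have hY'le : ∀ n, Y' n ⊆ mx.1 n := fun n => this.1 n
    have : BB A Y' ≤ BB A mx.1 := BB_mono A hY'le
    exact hg (this hgY')
  rw [htop] at hmxBasis
  exact free_of_isBasisSet_top hmxBasis

end HillAux

open HillAux in
/-- Hill's theorem: an abelian group is free if it is the union of a
countable ascending chain of free, pure subgroups (`H` is pure in `G` if
`nG ∩ H = nH` for all `n : ℤ`). -/
theorem hill_free_of_countable_pure_chain {G : Type*} [AddCommGroup G]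
    (Gchain : ℕ → AddSubgroup G)
    (hzero : Gchain 0 = ⊥)
    (hmono : Monotone Gchain)
    (hfree : ∀ k, Module.Free ℤ ↥(Gchain k))
    (hpure : ∀ k, ∀ n : ℤ,
      {x : G | x ∈ Gchain k ∧ ∃ g : G, n • g = x} =
        {x : G | ∃ h ∈ Gchain k, n • h = x})
    (hunion : (⨆ k, Gchain k) = ⊤) :
    Module.Free ℤ G := by
  classical
  set A : ℕ → Submodule ℤ G := fun k => AddSubgroup.toIntSubmodule (Gchain k) with hA
  have hmemA : ∀ k (x : G), x ∈ A k ↔ x ∈ Gchain k := fun k x => Iff.rfl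
  haveI hfr : ∀ n, Module.Free ℤ ↥(A n) := fun n => hfree n
  have hmono' : Monotone A := fun i j hij x hx => hmono hij hx
  have hex : ∀ x : G, ∃ n, x ∈ A n := by
    intro x
    have hx : x ∈ ⨆ k, Gchain k := by rw [hunion]; trivial
    obtain ⟨n, hn⟩ := (AddSubgroup.mem_iSup_of_directed (hmono.directed_le)).1 hx
    exact ⟨n, hn⟩
  -- torsion-freeness
  have ntf : ∀ (m : ℤ), m ≠ 0 → ∀ x : G, m • x = 0 → x = 0 := by
    intro m hm x hx
    obtain ⟨n, hn⟩ := hex x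
    haveI := hfr n
    haveI : NoZeroSMulDivisors ℤ ↥(A n) := ⟨fun h => smul_eq_zero.1 h⟩
    have : m • (⟨x, hn⟩ : ↥(A n)) = 0 := by
      apply Subtype.ext
      exact hx
    rcases smul_eq_zero.1 this with h | h
    · exact absurd h hm
    · simpa using congrArg Subtype.val h
  have hdc : ∀ k (m : ℤ), m ≠ 0 → ∀ x : G, m • x ∈ A k → x ∈ A k := by
    intro k m hm x hx
    have h1 : m • x ∈ {x : G | x ∈ Gchain k ∧ ∃ g : G, m • g = x} := ⟨hx, x, rfl⟩
    rw [hpure k m] at h1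
    obtain ⟨h, hh, heq⟩ := h1
    have : m • (x - h) = 0 := by
      rw [smul_sub, heq]
      abel
    have := ntf m hm _ this
    have hxh : x = h := by
      have := sub_eq_zero.1 this
      exact this
    rw [hxh]
    exact hh
  exact hill_main A hmono' hex hdc
end

section
/- Over a valuation domain R (or more generally a Prüfer domain), a submodule N of an R-module M is pure if and only if it is relatively divisible, i.e., rM ∩ N = rN for all r ∈ R. -/
open Cardinal Pointwise

universe u v

/-! ### Auxiliary lemmas -/

section MinDvd

/-- In a commutative monoid with total divisibility, every nonempty finite set
has a member dividing all members. -/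
lemma exists_mem_dvd_all {α : Type*} [Monoid α] (total : ∀ a b : α, a ∣ b ∨ b ∣ a) :
    ∀ t : Finset α, t.Nonempty → ∃ p ∈ t, ∀ b ∈ t, p ∣ b := by
  classical
  intro t
  induction t using Finset.induction_on with
  | empty => rintro ⟨x, hx⟩; exact absurd hx (Finset.notMem_empty x)
  | @insert a s ha ih =>
    intro _
    rcases s.eq_empty_or_nonempty with rfl | hs
    · refine ⟨a, Finset.mem_insert_self _ _, ?_⟩
      intro b hb
      rcases Finset.mem_insert.1 hb with rfl | hb
      · exact dvd_rfl
      · exact absurd hb (Finset.notMem_empty b)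
    · obtain ⟨p, hp, hpd⟩ := ih hs
      rcases total a p with h | h
      · refine ⟨a, Finset.mem_insert_self _ _, ?_⟩
        intro b hb
        rcases Finset.mem_insert.1 hb with rfl | hb
        · exact dvd_rfl
        · exact h.trans (hpd b hb)
      · refine ⟨p, Finset.mem_insert_of_mem hp, ?_⟩
        intro b hb
        rcases Finset.mem_insert.1 hb with rfl | hb
        · exact h
        · exact hpd b hb

end MinDvd

section LemV

/-- Over a commutative ring with total divisibility (e.g. a valuation ring),
relatively divisible submodules are pure: the key matrix-pivot induction. -/
lemma lemV {R : Type*} {M : Type*} [CommRing R] [AddCommGroup M] [Module R M]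
    (total : ∀ a b : R, a ∣ b ∨ b ∣ a) (N : Submodule R M)
    (hRD : ∀ (r : R) (z : M), z ∈ N → (∃ m : M, z = r • m) → ∃ w ∈ N, z = r • w) :
    ∀ (n : ℕ) (ι κ : Type) [Fintype ι] [Fintype κ] [DecidableEq ι] [DecidableEq κ]
      (s : Finset ι), s.card = n → ∀ (r : ι → κ → R) (a : ι → M),
      (∀ i ∈ s, a i ∈ N) →
      ∀ (x : κ → M), (∀ i ∈ s, ∑ j, r i j • x j = a i) →
      ∃ y : κ → M, (∀ j, y j ∈ N) ∧ ∀ i ∈ s, ∑ j, r i j • y j = a i := by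
  intro n
  induction n with
  | zero =>
    intro ι κ _ _ _ _ s hs r a ha x hx
    refine ⟨0, fun j => N.zero_mem, ?_⟩
    intro i hi
    rw [Finset.card_eq_zero.1 hs] at hi
    exact absurd hi (Finset.notMem_empty i)
  | succ n IH =>
    intro ι κ _ _ _ _ s hs r a ha x hx
    classical
    rcases isEmpty_or_nonempty κ with hκ | hκ
    · refine ⟨0, fun j => N.zero_mem, ?_⟩
      intro i hi
      have h0 := hx i hi
      simp only [Finset.univ_eq_empty, Finset.sum_empty] at h0 ⊢
      exact h0
    · have hsne : s.Nonempty := Finset.card_pos.mp (by omega)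
      obtain ⟨p, hpt, hpd⟩ := exists_mem_dvd_all total
        ((s ×ˢ (Finset.univ : Finset κ)).image fun q => r q.1 q.2)
        ((hsne.product Finset.univ_nonempty).image _)
      obtain ⟨⟨i0, j0⟩, hij0, hp⟩ := Finset.mem_image.1 hpt
      have hi0 : i0 ∈ s := (Finset.mem_product.1 hij0).1
      have hp : r i0 j0 = p := hp
      have hex : ∀ i, i ∈ s → ∀ j, ∃ u, r i j = p * u := by
        intro i hi j
        have hmem : ((i, j) : ι × κ) ∈ s ×ˢ (Finset.univ : Finset κ) :=
          Finset.mem_product.2 ⟨hi, Finset.mem_univ j⟩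
        obtain ⟨uu, huu⟩ := hpd _ (Finset.mem_image_of_mem (fun q => r q.1 q.2) hmem)
        exact ⟨uu, huu⟩
      choose! c hc using hex
      set r' : ι → κ → R := fun i j => r i j - c i j0 * r i0 j with hr'
      set a' : ι → M := fun i => a i - c i j0 • a i0 with ha'
      have hs'card : (s.erase i0).card = n := by
        rw [Finset.card_erase_of_mem hi0, hs]
        omega
      have ha'mem : ∀ i ∈ s.erase i0, a' i ∈ N := fun i hi =>
        sub_mem (ha i (Finset.mem_of_mem_erase hi)) (N.smul_mem _ (ha i0 hi0))
      have hx' : ∀ i ∈ s.erase i0, ∑ j, r' i j • x j = a' i := by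
        intro i hi
        calc ∑ j, r' i j • x j
            = ∑ j, (r i j • x j - c i j0 • (r i0 j • x j)) := by
              refine Finset.sum_congr rfl fun j _ => ?_
              rw [hr', sub_smul, mul_smul]
          _ = (∑ j, r i j • x j) - c i j0 • ∑ j, r i0 j • x j := by
              rw [Finset.sum_sub_distrib, Finset.smul_sum]
          _ = a' i := by rw [hx i (Finset.mem_of_mem_erase hi), hx i0 hi0, ha']
      obtain ⟨y', hy'N, hy'⟩ := IH ι κ (s.erase i0) hs'card r' a' ha'mem x hx'
      set e : M := a i0 - ∑ j ∈ Finset.univ \ {j0}, r i0 j • y' j with he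
      have heN : e ∈ N :=
        sub_mem (ha i0 hi0) (Submodule.sum_mem _ fun j _ => N.smul_mem _ (hy'N j))
      have hepM : ∃ m0 : M, e = p • m0 := by
        refine ⟨(∑ j, c i0 j • x j) - ∑ j ∈ Finset.univ \ {j0}, c i0 j • y' j, ?_⟩
        rw [he, smul_sub, Finset.smul_sum, Finset.smul_sum]
        congr 1
        · rw [← hx i0 hi0]
          refine Finset.sum_congr rfl fun j _ => ?_
          rw [hc i0 hi0 j, mul_smul]
        · refine Finset.sum_congr rfl fun j _ => ?_
          rw [hc i0 hi0 j, mul_smul]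
      obtain ⟨w, hwN, hew⟩ := hRD p e heN hepM
      set Y : κ → M := Function.update y' j0 w with hY
      have hYN : ∀ j, Y j ∈ N := by
        intro j
        rw [hY, Function.update_apply]
        split
        · exact hwN
        · exact hy'N j
      have hrow0 : ∑ j, r i0 j • Y j = a i0 := by
        have h1 : ∀ j, r i0 j • Y j =
            Function.update (fun j => r i0 j • y' j) j0 (r i0 j0 • w) j := by
          intro j
          rcases eq_or_ne j j0 with rfl | hj
          · rw [hY]; simp
          · rw [hY, Function.update_of_ne hj, Function.update_of_ne hj]
        rw [Finset.sum_congr rfl fun j _ => h1 j,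
          Finset.sum_update_of_mem (Finset.mem_univ j0), hp, ← hew]
        rw [he]
        abel
      have hrows : ∀ i ∈ s.erase i0, ∑ j, r i j • Y j = a i := by
        intro i hi
        have his : i ∈ s := Finset.mem_of_mem_erase hi
        have h1 : ∑ j, r' i j • Y j = a' i := by
          rw [← hy' i hi]
          refine Finset.sum_congr rfl fun j _ => ?_
          rcases eq_or_ne j j0 with rfl | hj
          · have h0 : r' i j = 0 := by
              rw [hr']
              simp only
              rw [hc i his j, hp]
              ring
            rw [h0, zero_smul, zero_smul]
          · rw [hY, Function.update_of_ne hj]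
        have h2 : ∀ j, r i j • Y j = r' i j • Y j + c i j0 • (r i0 j • Y j) := by
          intro j
          rw [hr']
          simp only
          rw [sub_smul, mul_smul, sub_add_cancel]
        rw [Finset.sum_congr rfl fun j _ => h2 j, Finset.sum_add_distrib, h1,
          ← Finset.smul_sum, hrow0, ha']
        simp only
        abel
      refine ⟨Y, hYN, ?_⟩
      intro i hi
      rcases eq_or_ne i i0 with rfl | hne
      · exact hrow0
      · exact hrows i (Finset.mem_erase.2 ⟨hne, hi⟩)

end LemV

section Localized

variable {R : Type u} {M : Type v} [CommRing R] [AddCommGroup M] [Module R M]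

/-- The localization of a submodule, as a submodule of the localized module. -/
def locN (S : Submonoid R) (N : Submodule R M) :
    Submodule (Localization S) (LocalizedModule S M) where
  carrier := {ξ | ∃ z s, z ∈ N ∧ ξ = LocalizedModule.mk z s}
  zero_mem' := ⟨0, 1, N.zero_mem, (LocalizedModule.zero_mk 1).symm⟩
  add_mem' := by
    rintro ξ η ⟨z, s, hz, rfl⟩ ⟨z', s', hz', rfl⟩
    refine ⟨s' • z + s • z', s * s', ?_, LocalizedModule.mk_add_mk⟩
    exact add_mem (N.smul_mem _ hz) (N.smul_mem _ hz')
  smul_mem' := by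
    intro ρ ξ hξ
    obtain ⟨z, s, hz, rfl⟩ := hξ
    induction ρ using Localization.induction_on with
    | H q =>
      obtain ⟨q1, q2⟩ := q
      exact ⟨q1 • z, q2 * s, N.smul_mem _ hz, LocalizedModule.mk_smul_mk q1 z q2 s⟩

lemma locN_rd (S : Submonoid R) (N : Submodule R M)
    (hRD : ∀ (r : R) (z : M), z ∈ N → (∃ m : M, z = r • m) → ∃ w ∈ N, z = r • w) :
    ∀ (ρ : Localization S) (ξ : LocalizedModule S M), ξ ∈ locN S N →
      (∃ η, ξ = ρ • η) → ∃ ν ∈ locN S N, ξ = ρ • ν := by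
  intro ρ ξ hξ hdvd
  obtain ⟨η, hη⟩ := hdvd
  obtain ⟨z, t, hz, rfl⟩ := hξ
  induction ρ using Localization.induction_on with
  | H q =>
    obtain ⟨r, s⟩ := q
    obtain ⟨m, w, rfl⟩ : ∃ m w, η = LocalizedModule.mk m w :=
      LocalizedModule.induction_on (fun m w => ⟨m, w, rfl⟩) η
    rw [LocalizedModule.mk_smul_mk] at hη
    obtain ⟨u, hu⟩ := LocalizedModule.mk_eq.1 hη
    have hz1N : ((u * (s * w) : S) : R) • z ∈ N := N.smul_mem _ hz
    have hz1 : ((u * (s * w) : S) : R) • z = r • (((u * t : S) : R) • m) := by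
      have h := hu
      simp only [Submonoid.smul_def, Submonoid.coe_mul, smul_smul] at h ⊢
      rw [h]
      congr 1
      ring
    obtain ⟨w', hw'N, hww⟩ := hRD r _ hz1N ⟨_, hz1⟩
    refine ⟨LocalizedModule.mk w' (u * w * t), ⟨w', _, hw'N, rfl⟩, ?_⟩
    rw [LocalizedModule.mk_smul_mk, ← hww]
    have hden : (u * (s * w)) * t = s * (u * w * t) := by
      ext
      push_cast
      ring
    rw [← hden]
    exact (LocalizedModule.mk_cancel_common_left (u * (s * w)) t z).symm

end Localized

section Prufer

variable {R : Type u} [CommRing R] [IsDomain R]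

lemma prufer_localization_total
    (hPrufer : ∀ I : Ideal R, I ≠ ⊥ → I.FG →
      IsUnit (I : FractionalIdeal (nonZeroDivisors R) (FractionRing R)))
    (𝔪 : Ideal R) [𝔪.IsMaximal] (a b : R) :
    algebraMap R (Localization 𝔪.primeCompl) a ∣ algebraMap R (Localization 𝔪.primeCompl) b ∨
      algebraMap R (Localization 𝔪.primeCompl) b ∣ algebraMap R (Localization 𝔪.primeCompl) a := by
  classical
  set Rq := Localization 𝔪.primeCompl
  set f : R →+* Rq := algebraMap R Rq with hf
  by_cases ha0 : a = 0
  · exact Or.inr (by rw [ha0, map_zero]; exact dvd_zero _)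
  by_cases hb0 : b = 0
  · exact Or.inl (by rw [hb0, map_zero]; exact dvd_zero _)
  set I : Ideal R := Ideal.span {a, b} with hI
  have haI : a ∈ I := Ideal.subset_span (by simp)
  have hbI : b ∈ I := Ideal.subset_span (by simp)
  have hIbot : I ≠ ⊥ := by
    intro h
    rw [h] at haI
    exact ha0 (Ideal.mem_bot.1 haI)
  have hIfg : I.FG := ⟨{a, b}, by simp [hI]⟩
  obtain ⟨U, hU⟩ := hPrufer I hIbot hIfg
  set u : FractionalIdeal (nonZeroDivisors R) (FractionRing R) :=
    (I : FractionalIdeal (nonZeroDivisors R) (FractionRing R))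
  set vF : FractionalIdeal (nonZeroDivisors R) (FractionRing R) := ↑(U⁻¹)
  have huv : u * vF = 1 := by rw [← hU]; exact_mod_cast U.mul_inv
  have h1' : (1 : FractionRing R) ∈
      ((u : Submodule R (FractionRing R)) * (vF : Submodule R (FractionRing R))) := by
    rw [← FractionalIdeal.coe_mul, huv]
    exact FractionalIdeal.mem_coe.2 ((FractionalIdeal.mem_one_iff _).2 ⟨1, map_one _⟩)
  -- key extraction
  have key : ∀ z : FractionRing R,
      z ∈ (u : Submodule R (FractionRing R)) * (vF : Submodule R (FractionRing R)) →
      ∀ ε : R, algebraMap R (FractionRing R) ε = z → ε ∈ 𝔪 ∨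
        ∃ ε' σ : R, ε' ∉ 𝔪 ∧ σ ∈ I ∧ ∀ w ∈ I, ∃ δ : R, ε' * w = δ * σ := by
    intro z hz
    refine Submodule.mul_induction_on' (C := fun z _ => ∀ ε : R,
        algebraMap R (FractionRing R) ε = z → ε ∈ 𝔪 ∨
        ∃ ε' σ : R, ε' ∉ 𝔪 ∧ σ ∈ I ∧ ∀ w ∈ I, ∃ δ : R, ε' * w = δ * σ) ?_ ?_ hz
    · intro m hm nn hnn ε hε
      by_cases hεm : ε ∈ 𝔪
      · exact Or.inl hεm
      refine Or.inr ?_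
      obtain ⟨σ, hσI, hσ⟩ := (FractionalIdeal.mem_coeIdeal _).1 (FractionalIdeal.mem_coe.1 hm)
      refine ⟨ε, σ, hεm, hσI, ?_⟩
      intro w hw
      have hwn : algebraMap R (FractionRing R) w * nn
          ∈ (1 : FractionalIdeal (nonZeroDivisors R) (FractionRing R)) := by
        rw [← huv]
        exact FractionalIdeal.mul_mem_mul
          ((FractionalIdeal.mem_coeIdeal _).2 ⟨w, hw, rfl⟩) (FractionalIdeal.mem_coe.1 hnn)
      obtain ⟨δ, hδ⟩ := (FractionalIdeal.mem_one_iff _).1 hwn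
      refine ⟨δ, IsFractionRing.injective R (FractionRing R) ?_⟩
      rw [map_mul, map_mul, hε, hσ, hδ]
      ring
    · intro x hx y hy Px Py ε hε
      by_cases hεm : ε ∈ 𝔪
      · exact Or.inl hεm
      have hx1 : x ∈ (1 : FractionalIdeal (nonZeroDivisors R) (FractionRing R)) := by
        rw [← huv]
        exact FractionalIdeal.mem_coe.1 (by rw [FractionalIdeal.coe_mul]; exact hx)
      obtain ⟨ε₁, hε₁⟩ := (FractionalIdeal.mem_one_iff _).1 hx1
      have hε₂ : algebraMap R (FractionRing R) (ε - ε₁) = y := by rw [map_sub, hε, hε₁]; ring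
      by_cases h1m : ε₁ ∈ 𝔪
      · have h2m : ε - ε₁ ∉ 𝔪 := fun h => hεm (by
          have := Ideal.add_mem 𝔪 h1m h
          rwa [add_sub_cancel] at this)
        rcases Py (ε - ε₁) hε₂ with h | h
        · exact absurd h h2m
        · exact Or.inr h
      · rcases Px ε₁ hε₁ with h | h
        · exact absurd h h1m
        · exact Or.inr h
  have h1m : (1 : R) ∉ 𝔪 := by
    intro h
    exact (Ideal.IsMaximal.ne_top ‹𝔪.IsMaximal›) ((Ideal.eq_top_iff_one 𝔪).2 h)
  rcases key 1 h1' 1 (map_one _) with h | h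
  · exact absurd h h1m
  obtain ⟨ε, σ, hεm, hσI, hδ⟩ := h
  obtain ⟨A, hA⟩ := hδ a haI
  obtain ⟨B, hB⟩ := hδ b hbI
  obtain ⟨α, β, hαβ⟩ := Ideal.mem_span_pair.1 hσI
  have hεu : IsUnit (f ε) :=
    IsLocalization.map_units Rq (⟨ε, show ε ∈ 𝔪.primeCompl from hεm⟩ : 𝔪.primeCompl)
  obtain ⟨εinv, hεinv⟩ := hεu.exists_left_inv
  have h1 : (εinv * f A) * f σ = f a := by
    have : f ε * f a = f A * f σ := by rw [← map_mul, ← map_mul, hA]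
    calc (εinv * f A) * f σ = εinv * (f A * f σ) := by ring
      _ = εinv * (f ε * f a) := by rw [this]
      _ = (εinv * f ε) * f a := by ring
      _ = f a := by rw [hεinv, one_mul]
  have h2 : (εinv * f B) * f σ = f b := by
    have : f ε * f b = f B * f σ := by rw [← map_mul, ← map_mul, hB]
    calc (εinv * f B) * f σ = εinv * (f B * f σ) := by ring
      _ = εinv * (f ε * f b) := by rw [this]
      _ = (εinv * f ε) * f b := by ring
      _ = f b := by rw [hεinv, one_mul]
  have hσab : f σ = f α * f a + f β * f b := by
    rw [← map_mul, ← map_mul, ← map_add, hαβ]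
  set a1 : Rq := εinv * f A
  set b1 : Rq := εinv * f B
  have hkey : f σ * (1 - (f α * a1 + f β * b1)) = 0 := by
    calc f σ * (1 - (f α * a1 + f β * b1))
        = f σ - (f α * (a1 * f σ) + f β * (b1 * f σ)) := by ring
      _ = f σ - (f α * f a + f β * f b) := by rw [h1, h2]
      _ = 0 := by rw [← hσab, sub_self]
  rcases mul_eq_zero.1 hkey with hσ0 | hrest
  · refine Or.inr ?_
    have : f a = 0 := by rw [← h1, hσ0, mul_zero]
    rw [this]
    exact dvd_zero _
  · have hone : IsUnit (f α * a1 + f β * b1) := by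
      have h := sub_eq_zero.1 hrest
      rw [← h]
      exact isUnit_one
    rcases IsLocalRing.isUnit_or_isUnit_of_isUnit_add hone with h | h
    · have ha1 : IsUnit a1 := isUnit_of_mul_isUnit_right h
      obtain ⟨a1inv, ha1inv⟩ := ha1.exists_left_inv
      have hσa : f σ = a1inv * f a := by
        rw [← h1, ← mul_assoc, ha1inv, one_mul]
      exact Or.inl ⟨b1 * a1inv, by rw [← h2, hσa]; ring⟩
    · have hb1 : IsUnit b1 := isUnit_of_mul_isUnit_right h
      obtain ⟨b1inv, hb1inv⟩ := hb1.exists_left_inv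
      have hσb : f σ = b1inv * f b := by
        rw [← h2, ← mul_assoc, hb1inv, one_mul]
      exact Or.inr ⟨a1 * b1inv, by rw [← h1, hσb]; ring⟩

/-- A helper: cancel a unit factor in a divisibility. -/
lemma dvd_of_dvd_mul_unit {A : Type*} [CommRing A] {x y w : A} (hw : IsUnit w)
    (h : x ∣ y * w) : x ∣ y := by
  obtain ⟨v, hv⟩ := hw.exists_left_inv
  obtain ⟨c, hc⟩ := h
  refine ⟨c * v, ?_⟩
  calc y = y * (w * v) := by rw [mul_comm w v, hv, mul_one]
    _ = (y * w) * v := by ring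
    _ = x * (c * v) := by rw [hc]; ring

lemma prufer_localization_total' 
    (hPrufer : ∀ I : Ideal R, I ≠ ⊥ → I.FG →
      IsUnit (I : FractionalIdeal (nonZeroDivisors R) (FractionRing R)))
    (𝔪 : Ideal R) [𝔪.IsMaximal] (ξ η : Localization 𝔪.primeCompl) :
    ξ ∣ η ∨ η ∣ ξ := by
  obtain ⟨⟨rx, sx⟩, hx⟩ := IsLocalization.surj 𝔪.primeCompl ξ
  obtain ⟨⟨ry, sy⟩, hy⟩ := IsLocalization.surj 𝔪.primeCompl η
  dsimp only at hx hy
  have hux : IsUnit (algebraMap R (Localization 𝔪.primeCompl) (sx : R)) :=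
    IsLocalization.map_units _ sx
  have huy : IsUnit (algebraMap R (Localization 𝔪.primeCompl) (sy : R)) :=
    IsLocalization.map_units _ sy
  have hdx : ξ ∣ algebraMap R (Localization 𝔪.primeCompl) rx := ⟨_, hx.symm⟩
  have hdy : η ∣ algebraMap R (Localization 𝔪.primeCompl) ry := ⟨_, hy.symm⟩
  rcases prufer_localization_total hPrufer 𝔪 rx ry with h | h
  · refine Or.inl (dvd_of_dvd_mul_unit huy ?_)
    rw [hy]
    exact hdx.trans h
  · refine Or.inr (dvd_of_dvd_mul_unit hux ?_)
    rw [hx]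
    exact hdy.trans h

end Prufer

section PerPrime

variable {R : Type u} {M : Type v} [CommRing R] [IsDomain R] [AddCommGroup M] [Module R M]

lemma perprime
    (hPrufer : ∀ I : Ideal R, I ≠ ⊥ → I.FG →
      IsUnit (I : FractionalIdeal (nonZeroDivisors R) (FractionRing R)))
    (N : Submodule R M)
    (hRD : ∀ (r : R) (z : M), z ∈ N → (∃ m : M, z = r • m) → ∃ w ∈ N, z = r • w)
    (𝔪 : Ideal R) [𝔪.IsMaximal]
    (m n : ℕ) (r : Fin m → Fin n → R) (a : Fin m → M) (ha : ∀ i, a i ∈ N)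
    (x : Fin n → M) (hx : ∀ i, ∑ j, r i j • x j = a i) :
    ∃ t : R, t ∉ 𝔪 ∧ ∃ y : Fin n → M, (∀ j, y j ∈ N) ∧
      ∀ i, ∑ j, r i j • y j = t • a i := by
  classical
  set S := 𝔪.primeCompl
  set Rq := Localization S
  set f : R →+* Rq := algebraMap R Rq with hf
  have hsm : ∀ (cc : R) (z : M) (s : S),
      f cc • LocalizedModule.mk z s = LocalizedModule.mk (cc • z) s := by
    intro cc z s
    rw [hf, ← Localization.mk_one_eq_algebraMap, LocalizedModule.mk_smul_mk, one_mul]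
  have total := prufer_localization_total' hPrufer 𝔪
  have hrd' := locN_rd S N hRD
  have hconst : ∀ i, LocalizedModule.mk (a i) 1 ∈ locN S N := fun i => ⟨a i, 1, ha i, rfl⟩
  have hsolv : ∀ i ∈ (Finset.univ : Finset (Fin m)),
      ∑ j, f (r i j) • LocalizedModule.mk (x j) 1 = LocalizedModule.mk (a i) (1 : S) := by
    intro i _
    have : ∀ j, f (r i j) • LocalizedModule.mk (x j) (1 : S)
        = LocalizedModule.mkLinearMap S M (r i j • x j) := fun j => hsm _ _ _
    rw [Finset.sum_congr rfl fun j _ => this j, ← map_sum, hx i]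
    rfl
  obtain ⟨y, hyN, hy⟩ := lemV (R := Rq) (M := LocalizedModule S M)
    (fun aa bb => total aa bb) (locN S N)
    (fun ρ ξ h1 h2 => hrd' ρ ξ h1 h2)
    (Finset.univ : Finset (Fin m)).card (Fin m) (Fin n) Finset.univ rfl
    (fun i j => f (r i j)) (fun i => LocalizedModule.mk (a i) 1)
    (fun i _ => hconst i) (fun j => LocalizedModule.mk (x j) 1) hsolv
  have hyN' : ∀ j, ∃ z s, z ∈ N ∧ y j = LocalizedModule.mk z s := fun j => hyN j
  choose z sd hzN hmk using hyN'
  set s0 : S := ∏ j, sd j with hs0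
  have hcan : ∀ j, f (s0 : R) • y j
      = LocalizedModule.mk (((∏ k ∈ Finset.univ.erase j, sd k : S) : R) • z j) 1 := by
    intro j
    have hcs : (∏ k ∈ Finset.univ.erase j, sd k) * sd j = s0 :=
      Finset.prod_erase_mul _ _ (Finset.mem_univ j)
    rw [hmk j, hsm]
    have h1 : ((s0 : S) : R) • z j
        = (sd j) • (((∏ k ∈ Finset.univ.erase j, sd k : S) : R) • z j) := by
      have hcs' : sd j * (∏ k ∈ Finset.univ.erase j, sd k) = s0 := by
        rw [mul_comm]; exact hcs
      rw [Submonoid.smul_def, ← mul_smul, ← Submonoid.coe_mul, hcs']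
    rw [h1, LocalizedModule.mk_cancel]
  set nz : Fin n → M := fun j => ((∏ k ∈ Finset.univ.erase j, sd k : S) : R) • z j with hnz
  have hnzN : ∀ j, nz j ∈ N := fun j => N.smul_mem _ (hzN j)
  have heq2 : ∀ i, LocalizedModule.mk (∑ j, r i j • nz j) (1 : S)
      = LocalizedModule.mk ((s0 : R) • a i) 1 := by
    intro i
    have h := congrArg (fun ξ => f (s0 : R) • ξ) (hy i (Finset.mem_univ i))
    rw [Finset.smul_sum] at h
    have hl : ∀ j, f ((s0 : S) : R) • (f (r i j) • y j)
        = LocalizedModule.mk (r i j • nz j) 1 := by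
      intro j
      rw [smul_smul, mul_comm, ← smul_smul, hcan j, hsm]
    rw [Finset.sum_congr rfl fun j _ => hl j, hsm] at h
    have hr : ∀ j, LocalizedModule.mk (r i j • nz j) (1 : S)
        = LocalizedModule.mkLinearMap S M (r i j • nz j) := fun j => rfl
    rw [Finset.sum_congr rfl fun j _ => hr j, ← map_sum] at h
    exact h
  have heq3 : ∀ i, ∃ uu : S, (uu : R) • (∑ j, r i j • nz j) = (uu : R) • ((s0 : R) • a i) := by
    intro i
    obtain ⟨w, hw⟩ := LocalizedModule.mk_eq.1 (heq2 i)
    rw [one_smul, one_smul] at hw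
    exact ⟨w, by simpa [Submonoid.smul_def] using hw⟩
  choose uu huu using heq3
  set u0 : S := ∏ i, uu i with hu0
  have hfin : ∀ i, ∑ j, r i j • ((u0 : R) • nz j) = (((u0 * s0 : S) : R)) • a i := by
    intro i
    have hcu : (∏ k ∈ Finset.univ.erase i, uu k) * uu i = u0 :=
      Finset.prod_erase_mul _ _ (Finset.mem_univ i)
    have hc2 : ((∏ k ∈ Finset.univ.erase i, uu k : S) : R) * ((uu i : S) : R) = ((u0 : S) : R) := by
      rw [← Submonoid.coe_mul, hcu]
    calc ∑ j, r i j • ((u0 : R) • nz j)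
        = (u0 : R) • ∑ j, r i j • nz j := by
          rw [Finset.smul_sum]
          exact Finset.sum_congr rfl fun j _ => smul_comm _ _ _
      _ = ((∏ k ∈ Finset.univ.erase i, uu k : S) : R) • (((uu i : S) : R) • ∑ j, r i j • nz j) := by
          rw [← mul_smul, hc2]
      _ = ((∏ k ∈ Finset.univ.erase i, uu k : S) : R) • (((uu i : S) : R) • ((s0 : R) • a i)) := by
          rw [huu i]
      _ = (((u0 * s0 : S) : R)) • a i := by
          rw [← mul_smul, ← mul_smul, Submonoid.coe_mul, ← hc2]
  exact ⟨((u0 * s0 : S) : R), (u0 * s0).2, fun j => (u0 : R) • nz j,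
    fun j => N.smul_mem _ (hnzN j), hfin⟩

end PerPrime

lemma mem_ptsmul {R : Type u} {M : Type v} [CommRing R] [AddCommGroup M] [Module R M]
    (r : R) (S : Submodule R M) (x : M) : x ∈ r • S ↔ ∃ s ∈ S, r • s = x :=
  Submodule.mem_map

/-- over a Prüfer domain (every nonzero finitely generated ideal is
invertible), a submodule is pure if and only if it is relatively divisible. -/
theorem pure_iff_relativelyDivisible_of_prufer {R : Type u} {M : Type v} [CommRing R]
    [IsDomain R] [AddCommGroup M] [Module R M]
    (hPrufer : ∀ I : Ideal R, I ≠ ⊥ → I.FG →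
      IsUnit (I : FractionalIdeal (nonZeroDivisors R) (FractionRing R)))
    (N : Submodule R M) :
    IsPure N ↔ ∀ r : R, (r • (⊤ : Submodule R M)) ⊓ N = r • N := by
  constructor
  · intro hP r
    apply le_antisymm
    · rintro zz ⟨hz1, hz2⟩
      obtain ⟨mm, -, hmm⟩ := (mem_ptsmul _ _ _).mp hz1
      obtain ⟨y, hyN, hy⟩ := hP 1 1 (fun _ _ => r) (fun _ => zz) (fun _ => hz2)
        ⟨fun _ => mm, fun _ => Submodule.mem_top, fun i => by
          rw [Fin.sum_univ_one]; exact hmm⟩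
      have h0 := hy 0
      rw [Fin.sum_univ_one] at h0
      exact (mem_ptsmul _ _ _).mpr ⟨y 0, hyN 0, h0⟩
    · intro zz hz
      obtain ⟨w, hwN, hw⟩ := (mem_ptsmul _ _ _).mp hz
      exact ⟨(mem_ptsmul _ _ _).mpr ⟨w, Submodule.mem_top, hw⟩,
        hw ▸ N.smul_mem r hwN⟩
  · intro h
    have hRD : ∀ (rr : R) (z : M), z ∈ N → (∃ m : M, z = rr • m) → ∃ w ∈ N, z = rr • w := by
      intro rr z hzN hzD
      obtain ⟨mm, hm⟩ := hzD
      have hz : z ∈ (rr • (⊤ : Submodule R M)) ⊓ N :=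
        ⟨(mem_ptsmul _ _ _).mpr ⟨mm, Submodule.mem_top, hm.symm⟩, hzN⟩
      rw [h rr] at hz
      obtain ⟨w, hwN, hw⟩ := (mem_ptsmul _ _ _).mp hz
      exact ⟨w, hwN, hw.symm⟩
    intro m n r a ha hsolv
    obtain ⟨x, -, hx⟩ := hsolv
    classical
    set T : Ideal R :=
      { carrier := {t | ∃ y : Fin n → M, (∀ j, y j ∈ N) ∧ ∀ i, ∑ j, r i j • y j = t • a i}
        zero_mem' := ⟨0, fun j => N.zero_mem, fun i => by simp⟩
        add_mem' := by
          rintro t t' ⟨y, hyN, hy⟩ ⟨y', hy'N, hy'⟩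
          refine ⟨y + y', fun j => add_mem (hyN j) (hy'N j), fun i => ?_⟩
          simp only [Pi.add_apply, smul_add]
          rw [Finset.sum_add_distrib, hy i, hy' i, add_smul]
        smul_mem' := by
          rintro cc t ⟨y, hyN, hy⟩
          refine ⟨fun j => cc • y j, fun j => N.smul_mem _ (hyN j), fun i => ?_⟩
          calc ∑ j, r i j • (cc • y j) = cc • ∑ j, r i j • y j := by
                rw [Finset.smul_sum]
                exact Finset.sum_congr rfl fun j _ => smul_comm _ _ _
            _ = cc • (t • a i) := by rw [hy i]
            _ = (cc • t) • a i := by rw [smul_eq_mul, mul_smul] } with hT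
    by_cases hTtop : T = ⊤
    · obtain ⟨y, hyN, hy⟩ := T.eq_top_iff_one.1 hTtop
      exact ⟨y, hyN, fun i => by have := hy i; rwa [one_smul] at this⟩
    · obtain ⟨𝔪, hmax, hTm⟩ := Ideal.exists_le_maximal T hTtop
      haveI := hmax
      obtain ⟨t, htm, y, hyN, hy⟩ := perprime hPrufer N hRD 𝔪 m n r a ha x hx
      exact absurd (hTm (show t ∈ T from ⟨y, hyN, hy⟩)) htm
end

section
/- Let M be a torsion-free module over a commutative domain which is a union of a chain (M_ν)_{ν<κ} of pure submodules, each possessing a G*(κ)-family 𝓑_ν of pure submodules. If (A_α)_{α<τ} is a continuous ascending chain of submodules of M with union M such that A_α ∩ M_ν ∈ 𝓑_ν for all α, ν and (A_α ∩ M_{ν+1}) + (A_{α+1} ∩ M_ν) ∈ 𝓑_{ν+1}, and each A_{α+1}/A_α has rank at most κ, then the family of modules A_α + (A_{α+1} ∩ M_ν), well-ordered by inclusion, forms a continuous ascending chain (N_ρ)_{ρ<σ} with union M such that each N_{ρ+1}/N_ρ has rank at most κ and is isomorphic to a quotient A/B with B < A both members of some family 𝓑_ν. -/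
open Cardinal Pointwise

universe u v w

/-- Enumeration of the distinct values of a monotone family, skipping repetitions. -/
noncomputable def gEnum {β : Type w} [Preorder β] (σ₀ : Ordinal.{v}) (f : Ordinal.{v} → β)
    (ρ : Ordinal.{v}) : Ordinal.{v} :=
  sInf {i | i < σ₀ ∧ ∀ ρ' (_ : ρ' < ρ), f (gEnum σ₀ f ρ') < f i}
termination_by ρ
decreasing_by exact ‹_›

theorem gEnum_def {β : Type w} [Preorder β] (σ₀ : Ordinal.{v}) (f : Ordinal.{v} → β)
    (ρ : Ordinal.{v}) :
    gEnum σ₀ f ρ = sInf {i | i < σ₀ ∧ ∀ ρ' (_ : ρ' < ρ), f (gEnum σ₀ f ρ') < f i} := by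
  rw [gEnum]

theorem mem_biSup_of_chain {R : Type u} {M : Type v} [CommRing R] [AddCommGroup M] [Module R M]
    (D : Ordinal.{v} → Submodule R M) (lam : Ordinal.{v})
    (hmono : ∀ a b : Ordinal.{v}, a ≤ b → b < lam → D a ≤ D b) (hlam : 0 < lam) (x : M) :
    (x ∈ ⨆ ν, ⨆ _ : ν < lam, D ν) ↔ ∃ ν, ν < lam ∧ x ∈ D ν := by
  constructor
  · intro hx
    have hdir : Directed (· ≤ ·) (fun ν : Ordinal => ⨆ _ : ν < lam, D ν) := by
      intro a b
      by_cases ha : a < lam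
      · by_cases hb : b < lam
        · refine ⟨max a b, ?_, ?_⟩
          · simp only [iSup_pos ha, iSup_pos (max_lt ha hb)]
            exact hmono _ _ (le_max_left a b) (max_lt ha hb)
          · simp only [iSup_pos hb, iSup_pos (max_lt ha hb)]
            exact hmono _ _ (le_max_right a b) (max_lt ha hb)
        · exact ⟨a, le_rfl, by simp [iSup_neg hb]⟩
      · exact ⟨b, by simp [iSup_neg ha], le_rfl⟩
    obtain ⟨ν, hν⟩ := (Submodule.mem_iSup_of_directed _ hdir).1 hx
    by_cases h : ν < lam
    · exact ⟨ν, h, by rwa [iSup_pos h] at hν⟩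
    · rw [iSup_neg h] at hν
      have hx0 : x = 0 := (Submodule.mem_bot R).1 hν
      exact ⟨0, hlam, hx0 ▸ zero_mem _⟩
  · rintro ⟨ν, hν, hx⟩
    exact (le_iSup₂ (f := fun ν (_ : ν < lam) => D ν) ν hν) hx

theorem rank_quot_le_quot {R : Type u} {M : Type v} [CommRing R] [AddCommGroup M] [Module R M]
    (P Q P' Q' : Submodule R M) (hQ : Q ≤ Q') (h : P' ⊓ Q ≤ P) :
    Module.rank R (↥Q ⧸ Submodule.comap Q.subtype P) ≤
      Module.rank R (↥Q' ⧸ Submodule.comap Q'.subtype P') := by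
  classical
  let L : ↥Q →ₗ[R] ↥Q' ⧸ Submodule.comap Q'.subtype P' :=
    (Submodule.comap Q'.subtype P').mkQ.comp (Submodule.inclusion hQ)
  have hker : LinearMap.ker L ≤ Submodule.comap Q.subtype P := by
    intro x hx
    have h1 : (x : M) ∈ P' := by
      simp only [L, LinearMap.mem_ker, LinearMap.comp_apply, Submodule.mkQ_apply,
        Submodule.Quotient.mk_eq_zero, Submodule.mem_comap] at hx
      exact hx
    exact h ⟨h1, x.2⟩
  have h2 : Module.rank R (↥Q ⧸ Submodule.comap Q.subtype P) ≤
      Module.rank R (↥Q ⧸ LinearMap.ker L) := by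
    have hle : LinearMap.ker L ≤ Submodule.comap LinearMap.id (Submodule.comap Q.subtype P) := by
      simpa using hker
    refine LinearMap.rank_le_of_surjective
      (Submodule.mapQ (LinearMap.ker L) (Submodule.comap Q.subtype P) LinearMap.id hle) ?_
    intro y
    obtain ⟨x, rfl⟩ := Submodule.Quotient.mk_surjective _ y
    exact ⟨Submodule.Quotient.mk x, by simp [Submodule.mapQ_apply]⟩
  have h3 : Module.rank R (↥Q ⧸ LinearMap.ker L) ≤
      Module.rank R (↥Q' ⧸ Submodule.comap Q'.subtype P') := by
    rw [(L.quotKerEquivRange).rank_eq]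
    exact Submodule.rank_le _
  exact h2.trans h3

/-- A `G*(κ)`-family of submodules of the submodule `P` of `M` (members viewed as
submodules of `M` contained in `P`). -/
def IsGStarFamilyOn {R : Type u} {M : Type v} [CommRing R] [AddCommGroup M] [Module R M]
    (κ : Cardinal.{v}) (P : Submodule R M) (𝓑 : Set (Submodule R M)) : Prop :=
  (∀ N ∈ 𝓑, N ≤ P) ∧ ⊥ ∈ 𝓑 ∧ P ∈ 𝓑 ∧
  (∀ S : Set (Submodule R M), S ⊆ 𝓑 → S.Nonempty → IsChain (· ≤ ·) S → sSup S ∈ 𝓑) ∧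
  (∀ H : Set M, H ⊆ ↑P → #H ≤ κ → ∀ A₀ ∈ 𝓑, ∃ A ∈ 𝓑, A₀ ≤ A ∧ H ⊆ ↑A ∧
    Module.rank R (↥A ⧸ Submodule.comap A.subtype A₀) ≤ κ)

/-- Lemma 3: given a continuous chain `(M_ν)_{ν<κ}` of pure submodules with
union `M`, each with a `G*(κ)`-family `𝓑_ν` of pure submodules, and a continuous chain
`(A_α)_{α<τ}` with union `M` compatible with the families as in Lemma 2, the modules
`A_α + (A_{α+1} ∩ M_ν)`, well-ordered by inclusion, form a continuous ascending chain
`(N_ρ)_{ρ<σ}` with union `M` whose successive quotients have rank at most `κ` and are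
isomorphic to quotients `A/B` with `B < A` both in some family `𝓑_ν`. -/
theorem chain_refinement {R : Type u} {M : Type v} [CommRing R] [IsDomain R]
    [AddCommGroup M] [Module R M] [NoZeroSMulDivisors R M]
    (κ : Cardinal.{v}) (hκ : Cardinal.aleph0 ≤ κ)
    (Mc : Ordinal.{v} → Submodule R M)
    (hMzero : Mc 0 = ⊥)
    (hMmono : ∀ ν₁ ν₂ : Ordinal, ν₁ ≤ ν₂ → ν₂ < κ.ord → Mc ν₁ ≤ Mc ν₂)
    (hMcont : ∀ lam : Ordinal, lam < κ.ord → Order.IsSuccLimit lam →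
      Mc lam = ⨆ (ν : Ordinal) (_ : ν < lam), Mc ν)
    (hMpure : ∀ ν : Ordinal, ν < κ.ord → IsPure (Mc ν))
    (hMunion : (⨆ (ν : Ordinal) (_ : ν < κ.ord), Mc ν) = ⊤)
    (𝓑 : Ordinal.{v} → Set (Submodule R M))
    (h𝓑 : ∀ ν : Ordinal, ν < κ.ord → IsGStarFamilyOn κ (Mc ν) (𝓑 ν))
    (h𝓑pure : ∀ ν : Ordinal, ν < κ.ord → ∀ N ∈ 𝓑 ν, IsPureIn N (Mc ν))
    (τ : Ordinal.{v}) (A : Ordinal.{v} → Submodule R M)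
    (hAzero : A 0 = ⊥)
    (hAmono : ∀ α₁ α₂ : Ordinal, α₁ ≤ α₂ → α₂ < τ → A α₁ ≤ A α₂)
    (hAcont : ∀ lam : Ordinal, lam < τ → Order.IsSuccLimit lam →
      A lam = ⨆ (α : Ordinal) (_ : α < lam), A α)
    (hAunion : (⨆ (α : Ordinal) (_ : α < τ), A α) = ⊤)
    (hmem : ∀ α ν : Ordinal, α < τ → ν < κ.ord → A α ⊓ Mc ν ∈ 𝓑 ν)
    (hmem' : ∀ α ν : Ordinal, α + 1 < τ → ν + 1 < κ.ord →
      (A α ⊓ Mc (ν + 1)) ⊔ (A (α + 1) ⊓ Mc ν) ∈ 𝓑 (ν + 1))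
    (hrank : ∀ α : Ordinal, α + 1 < τ →
      Module.rank R (↥(A (α + 1)) ⧸ Submodule.comap (A (α + 1)).subtype (A α)) ≤ κ) :
    ∃ (σ : Ordinal.{v}) (N : Ordinal.{v} → Submodule R M),
      (∀ ρ : Ordinal, ρ < σ → ∃ α ν : Ordinal, α + 1 < τ ∧ ν < κ.ord ∧
        N ρ = A α ⊔ (A (α + 1) ⊓ Mc ν)) ∧
      (∀ α ν : Ordinal, α + 1 < τ → ν < κ.ord →
        ∃ ρ : Ordinal, ρ < σ ∧ N ρ = A α ⊔ (A (α + 1) ⊓ Mc ν)) ∧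
      (∀ ρ₁ ρ₂ : Ordinal, ρ₁ ≤ ρ₂ → ρ₂ < σ → N ρ₁ ≤ N ρ₂) ∧
      (∀ lam : Ordinal, lam < σ → Order.IsSuccLimit lam →
        N lam = ⨆ (ρ : Ordinal) (_ : ρ < lam), N ρ) ∧
      ((⨆ (ρ : Ordinal) (_ : ρ < σ), N ρ) = ⊤) ∧
      (∀ ρ : Ordinal, ρ + 1 < σ →
        Module.rank R (↥(N (ρ + 1)) ⧸ Submodule.comap (N (ρ + 1)).subtype (N ρ)) ≤ κ ∧
        ∃ ν : Ordinal, ν < κ.ord ∧ ∃ Am ∈ 𝓑 ν, ∃ Bm ∈ 𝓑 ν, Bm < Am ∧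
          Nonempty ((↥(N (ρ + 1)) ⧸ Submodule.comap (N (ρ + 1)).subtype (N ρ)) ≃ₗ[R]
            (↥Am ⧸ Submodule.comap Am.subtype Bm))) := by
  classical
  have hxlt : ∀ x : Ordinal.{v}, x < x + 1 := fun x => by
    rw [Ordinal.add_one_eq_succ]; exact Order.lt_succ x
  set μ := κ.ord with hμdef
  have hμlim : Order.IsSuccLimit μ := Cardinal.isSuccLimit_ord hκ
  have hμ0 : μ ≠ 0 := hμlim.pos.ne'
  set τ₀ := Ordinal.pred τ with hτ₀def
  have hlt : ∀ {α : Ordinal.{v}}, α < τ₀ ↔ α + 1 < τ := by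
    intro α; rw [hτ₀def, Ordinal.lt_pred_iff_succ_lt, Ordinal.add_one_eq_succ]
  set σ₀ := μ * τ₀ with hσ₀def
  set f : Ordinal.{v} → Submodule R M :=
    fun i => A (i / μ) ⊔ (A (i / μ + 1) ⊓ Mc (i % μ)) with hf
  set g := gEnum σ₀ f with hg
  set cand : Ordinal.{v} → Set Ordinal.{v} :=
    fun ρ => {i | i < σ₀ ∧ ∀ ρ' (_ : ρ' < ρ), f (g ρ') < f i} with hcand
  have hgdef : ∀ ρ, g ρ = sInf (cand ρ) := fun ρ => gEnum_def σ₀ f ρ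
  have hsuccμ : ∀ {ν : Ordinal}, ν < μ → ν + 1 < μ := fun {ν} h => by
    rw [Ordinal.add_one_eq_succ]; exact hμlim.succ_lt h
  have hidx : ∀ i : Ordinal, i < σ₀ → (i / μ) + 1 < τ ∧ i % μ < μ ∧ μ * (i / μ) + i % μ = i := by
    intro i hi
    refine ⟨hlt.1 ?_, Ordinal.mod_lt i hμ0, Ordinal.div_add_mod i μ⟩
    rw [Ordinal.div_lt hμ0]; exact hi
  have hcompute : ∀ (α ν : Ordinal), ν < μ →
      (μ * α + ν) / μ = α ∧ (μ * α + ν) % μ = ν := by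
    intro α ν hν
    constructor
    · rw [Ordinal.mul_add_div _ hμ0, Ordinal.div_eq_zero_of_lt hν, add_zero]
    · rw [Ordinal.mul_add_mod_self, Ordinal.mod_eq_of_lt hν]
  have hfval : ∀ (α ν : Ordinal), ν < μ →
      f (μ * α + ν) = A α ⊔ (A (α + 1) ⊓ Mc ν) := by
    intro α ν hν
    simp only [hf, (hcompute α ν hν).1, (hcompute α ν hν).2]
  have hf0 : f 0 = ⊥ := by
    simp only [hf, Ordinal.zero_div, Ordinal.zero_mod, hMzero, hAzero]
    simp
  -- monotonicity of f
  have hfmono : ∀ i j : Ordinal, i ≤ j → j < σ₀ → f i ≤ f j := by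
    intro i j hij hj
    have hi : i < σ₀ := lt_of_le_of_lt hij hj
    obtain ⟨hτi, hνi, hdeci⟩ := hidx i hi
    obtain ⟨hτj, hνj, hdecj⟩ := hidx j hj
    have hdiv : i / μ ≤ j / μ := by
      rw [Ordinal.div_le hμ0]
      calc i ≤ j := hij
        _ < μ * (j / μ) + μ := by
            conv_lhs => rw [← hdecj]
            exact add_lt_add_right hνj _
        _ = μ * Order.succ (j / μ) := (Ordinal.mul_succ μ (j / μ)).symm
    rcases eq_or_lt_of_le hdiv with heq | hlt'
    · have hνle : i % μ ≤ j % μ := by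
        have h2 := hij
        rw [← hdeci, ← hdecj, ← heq] at h2
        exact le_of_add_le_add_left h2
      have h1 : Mc (i % μ) ≤ Mc (j % μ) := hMmono _ _ hνle hνj
      simp only [hf, heq]
      exact sup_le_sup_left (inf_le_inf_left _ h1) _
    · have hjτ : j / μ < τ := lt_trans (hxlt _) hτj
      have h1 : A (i / μ + 1) ≤ A (j / μ) := by
        apply hAmono _ _ _ hjτ
        rw [Ordinal.add_one_eq_succ]; exact Order.succ_le_of_lt hlt'
      simp only [hf]
      refine sup_le ((hAmono _ _ hlt'.le hjτ).trans le_sup_left)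
        (inf_le_left.trans (h1.trans le_sup_left))
  -- key lemma: elements of A α are in some f i
  have hkey : ∀ (α : Ordinal), α < τ → ∀ w : M, w ∈ A α →
      w = 0 ∨ ∃ i, i < σ₀ ∧ w ∈ f i := by
    intro α hατ w hw
    have hMuniv : ∀ u : M, ∃ ν', ν' < μ ∧ u ∈ Mc ν' := by
      intro u
      have : u ∈ (⨆ ν'', ⨆ _ : ν'' < μ, Mc ν'') := by rw [hMunion]; trivial
      exact (mem_biSup_of_chain Mc μ (fun a b hab hb => hMmono a b hab hb) hμlim.pos u).1 this
    rcases Ordinal.zero_or_succ_or_isSuccLimit α with h0 | ⟨β, hβ⟩ | hαlim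
    · left
      rw [h0, hAzero] at hw
      exact (Submodule.mem_bot R).1 hw
    · right
      have hβ' : α = β + 1 := by rw [Ordinal.add_one_eq_succ]; exact hβ.symm
      have hβτ₀ : β < τ₀ := hlt.2 (hβ' ▸ hατ)
      obtain ⟨ν', hν', hwν⟩ := hMuniv w
      refine ⟨μ * β + ν', ?_, ?_⟩
      · calc μ * β + ν' < μ * β + μ := add_lt_add_right hν' _
          _ = μ * Order.succ β := (Ordinal.mul_succ μ β).symm
          _ ≤ μ * τ₀ := mul_le_mul_right (Order.succ_le_of_lt hβτ₀) μ
      · rw [hfval β ν' hν']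
        exact Submodule.mem_sup_right (Submodule.mem_inf.2 ⟨hβ' ▸ hw, hwν⟩)
    · right
      rw [hAcont α hατ hαlim] at hw
      obtain ⟨β, hβα, hwβ⟩ := (mem_biSup_of_chain A α
        (fun a b hab hb => hAmono a b hab (lt_trans hb hατ)) hαlim.pos w).1 hw
      have hβτ₀ : β < τ₀ := hlt.2 (lt_of_le_of_lt (by
        rw [Ordinal.add_one_eq_succ]; exact Order.succ_le_of_lt hβα) hατ)
      refine ⟨μ * β, mul_lt_mul_of_pos_left hβτ₀ hμlim.pos, ?_⟩
      have : μ * β = μ * β + 0 := (add_zero _).symm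
      rw [this, hfval β 0 hμlim.pos]
      exact Submodule.mem_sup_left hwβ
  -- continuity of f at limits
  have hfcont : ∀ i : Ordinal, i < σ₀ → Order.IsSuccLimit i → f i = ⨆ j, ⨆ _ : j < i, f j := by
    intro i hi hil
    apply le_antisymm
    · obtain ⟨hτi, hνi, hdeci⟩ := hidx i hi
      have hατ : i / μ < τ := lt_trans (hxlt _) hτi
      intro x hx
      have hx' : x ∈ A (i / μ) ⊔ (A (i / μ + 1) ⊓ Mc (i % μ)) := hx
      obtain ⟨y, hy, z, hz, rfl⟩ := Submodule.mem_sup.1 hx'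
      have hmemsup : ∀ (j : Ordinal) (w : M), j < i → w ∈ f j →
          w ∈ ⨆ j, ⨆ _ : j < i, f j := by
        intro j w hj hw
        exact (le_iSup₂ (f := fun j (_ : j < i) => f j) j hj) hw
      have hykey : ∃ j, j < i ∧ y ∈ f j := by
        rcases Ordinal.zero_or_succ_or_isSuccLimit (i / μ) with h0 | ⟨β, hβ⟩ | hαlim
        · refine ⟨0, hil.pos, ?_⟩
          rw [h0, hAzero] at hy
          rw [(Submodule.mem_bot R).1 hy]
          exact zero_mem _
        · have hβ' : i / μ = β + 1 := by rw [Ordinal.add_one_eq_succ]; exact hβ.symm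
          have hyy : y ∈ A (β + 1) := hβ' ▸ hy
          have : y ∈ (⨆ ν'', ⨆ _ : ν'' < μ, Mc ν'') := by rw [hMunion]; trivial
          obtain ⟨ν', hν', hyν⟩ := (mem_biSup_of_chain Mc μ
            (fun a b hab hb => hMmono a b hab hb) hμlim.pos y).1 this
          refine ⟨μ * β + ν', ?_, ?_⟩
          · calc μ * β + ν' < μ * β + μ := add_lt_add_right hν' _
              _ = μ * Order.succ β := (Ordinal.mul_succ μ β).symm
              _ = μ * (i / μ) := by rw [← hβ]
              _ ≤ i := by conv_rhs => rw [← hdeci]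
                          exact le_self_add
          · rw [hfval β ν' hν']
            exact Submodule.mem_sup_right (Submodule.mem_inf.2 ⟨hyy, hyν⟩)
        · rw [hAcont _ hατ hαlim] at hy
          obtain ⟨β, hβα, hyβ⟩ := (mem_biSup_of_chain A (i / μ)
            (fun a b hab hb => hAmono a b hab (lt_trans hb hατ)) hαlim.pos y).1 hy
          refine ⟨μ * β, ?_, ?_⟩
          · calc μ * β < μ * (i / μ) := mul_lt_mul_of_pos_left hβα hμlim.pos
              _ ≤ i := by conv_rhs => rw [← hdeci]
                          exact le_self_add
          · have : μ * β = μ * β + 0 := (add_zero _).symm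
            rw [this, hfval β 0 hμlim.pos]
            exact Submodule.mem_sup_left hyβ
      have hzkey : ∃ j, j < i ∧ z ∈ f j := by
        rcases Ordinal.zero_or_succ_or_isSuccLimit (i % μ) with h0 | ⟨ν₀, hν₀⟩ | hνlim
        · refine ⟨0, hil.pos, ?_⟩
          have := (Submodule.mem_inf.1 hz).2
          rw [h0, hMzero] at this
          rw [(Submodule.mem_bot R).1 this]
          exact zero_mem _
        · exfalso
          have heq : i = Order.succ (μ * (i / μ) + ν₀) := by
            conv_lhs => rw [← hdeci]
            rw [← hν₀, Ordinal.add_succ]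
          have hlt2 : μ * (i / μ) + ν₀ < i := by
            conv_rhs => rw [heq]
            exact Order.lt_succ _
          have h3 := hil.succ_lt hlt2
          rw [← heq] at h3
          exact absurd h3 (lt_irrefl i)
        · have hz2 := (Submodule.mem_inf.1 hz).2
          rw [hMcont _ hνi hνlim] at hz2
          obtain ⟨ν', hν'1, hzν⟩ := (mem_biSup_of_chain Mc (i % μ)
            (fun a b hab hb => hMmono a b hab (lt_trans hb hνi)) hνlim.pos z).1 hz2
          refine ⟨μ * (i / μ) + ν', ?_, ?_⟩
          · conv_rhs => rw [← hdeci]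
            exact add_lt_add_right hν'1 _
          · rw [hfval _ ν' (lt_trans hν'1 hνi)]
            exact Submodule.mem_sup_right
              (Submodule.mem_inf.2 ⟨(Submodule.mem_inf.1 hz).1, hzν⟩)
      obtain ⟨j₁, hj₁, hyj⟩ := hykey
      obtain ⟨j₂, hj₂, hzj⟩ := hzkey
      exact add_mem (hmemsup j₁ y hj₁ hyj) (hmemsup j₂ z hj₂ hzj)
    · exact iSup₂_le fun j hj => hfmono j i hj.le hi
  -- basic facts about g and cand
  have hgmem : ∀ ρ, (cand ρ).Nonempty → g ρ ∈ cand ρ := fun ρ h => by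
    rw [hgdef]; exact csInf_mem h
  have hgle : ∀ ρ i, i ∈ cand ρ → g ρ ≤ i := fun ρ i h => by
    rw [hgdef]; exact csInf_le' h
  have hcanti : ∀ ρ' ρ : Ordinal, ρ' ≤ ρ → cand ρ ⊆ cand ρ' := by
    intro ρ' ρ h i hi
    exact ⟨hi.1, fun ρ'' h'' => hi.2 ρ'' (lt_of_lt_of_le h'' h)⟩
  have hglt : ∀ ρ' ρ : Ordinal, ρ' < ρ → (cand ρ).Nonempty → g ρ' < g ρ := by
    intro ρ' ρ h hne
    have h2 := hgmem ρ hne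
    have h1 := hgmem ρ' (hne.mono (hcanti ρ' ρ h.le))
    have hval : f (g ρ') < f (g ρ) := h2.2 ρ' h
    by_contra hcon
    push_neg at hcon
    exact absurd (hfmono _ _ hcon h1.1) hval.not_ge
  set Bad : Set Ordinal.{v} := {ρ | ¬ (cand ρ).Nonempty} with hBad
  have hσ₀Bad : σ₀ ∈ Bad := by
    intro hne
    have hall : ∀ ρ : Ordinal, ρ ≤ σ₀ → (cand ρ).Nonempty :=
      fun ρ h => hne.mono (hcanti ρ σ₀ h)
    have hge : ∀ ρ : Ordinal, ρ ≤ σ₀ → ρ ≤ g ρ := by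
      intro ρ
      induction ρ using Ordinal.induction with
      | h ρ IH =>
        intro hρ
        by_contra hcon
        push_neg at hcon
        have hgρσ : g ρ ≤ σ₀ := ((hgmem ρ (hall ρ hρ)).1).le
        have h1 := IH (g ρ) hcon hgρσ
        have h2 := hglt (g ρ) ρ hcon (hall ρ hρ)
        exact absurd (h1.trans_lt h2) (lt_irrefl _)
    exact absurd (hge σ₀ le_rfl) (not_le.2 (hgmem σ₀ hne).1)
  set σ := sInf Bad with hσdef
  have hσBad : σ ∈ Bad := csInf_mem ⟨σ₀, hσ₀Bad⟩
  have hσne : ∀ ρ : Ordinal, ρ < σ → (cand ρ).Nonempty := by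
    intro ρ h
    by_contra hc
    exact absurd (csInf_le' (show ρ ∈ Bad from hc)) (not_le.2 h)
  have hgσ₀ : ∀ ρ : Ordinal, ρ < σ → g ρ < σ₀ := fun ρ h => (hgmem ρ (hσne ρ h)).1
  -- comparability helper
  have hcomp : ∀ (i : Ordinal), i < σ₀ → ∀ ρ' : Ordinal, ρ' < σ →
      ¬ (f i ≤ f (g ρ')) → f (g ρ') < f i := by
    intro i hi ρ' hρ' hn
    rcases le_total (g ρ') i with h | h
    · exact lt_of_le_of_ne (hfmono _ _ h hi) (fun he => hn he.ge)
    · exact absurd (hfmono _ _ h (hgσ₀ ρ' hρ')) hn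
  -- exhaustiveness
  have hexh : ∀ i : Ordinal, i < σ₀ → ∃ ρ, ρ < σ ∧ f (g ρ) = f i := by
    intro i hi
    by_cases hT : ∃ ρ, ρ < σ ∧ f i ≤ f (g ρ)
    · set T : Set Ordinal.{v} := {ρ | ρ < σ ∧ f i ≤ f (g ρ)} with hTdef
      have hTne : T.Nonempty := hT
      have hρm := csInf_mem hTne
      refine ⟨sInf T, hρm.1, ?_⟩
      rcases eq_or_lt_of_le hρm.2 with he | hlt2
      · exact he.symm
      · exfalso
        have hicand : i ∈ cand (sInf T) := by
          refine ⟨hi, fun ρ' h' => ?_⟩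
          have hρ'σ : ρ' < σ := h'.trans hρm.1
          have hρ'T : ρ' ∉ T := fun hmem2 => absurd (csInf_le' hmem2) (not_le.2 h')
          have : ¬ (f i ≤ f (g ρ')) := fun hle => hρ'T ⟨hρ'σ, hle⟩
          exact hcomp i hi ρ' hρ'σ this
        have := hfmono _ _ (hgle _ _ hicand) hi
        exact absurd (lt_of_lt_of_le hlt2 this) (lt_irrefl _)
    · push_neg at hT
      exfalso
      apply hσBad
      exact ⟨i, hi, fun ρ' h' => hcomp i hi ρ' h' (hT ρ' h')⟩
  -- N monotone
  have hNmono : ∀ ρ₁ ρ₂ : Ordinal, ρ₁ ≤ ρ₂ → ρ₂ < σ → f (g ρ₁) ≤ f (g ρ₂) := by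
    intro ρ₁ ρ₂ h h2
    rcases eq_or_lt_of_le h with rfl | hlt2
    · exact le_rfl
    · exact ((hgmem ρ₂ (hσne _ h2)).2 ρ₁ hlt2).le
  -- N continuity at limits
  have hNcont : ∀ lam : Ordinal, lam < σ → Order.IsSuccLimit lam →
      f (g lam) = ⨆ ρ, ⨆ _ : ρ < lam, f (g ρ) := by
    intro lam hlam hlim
    have hglam := hgmem lam (hσne lam hlam)
    set S : Set Ordinal.{v} := g '' Set.Iio lam with hSdef
    have hSne : S.Nonempty := ⟨g 0, ⟨0, hlim.pos, rfl⟩⟩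
    have hSbdd : BddAbove S := by
      refine ⟨σ₀, ?_⟩
      rintro x ⟨ρ, hρ, rfl⟩
      exact (hgσ₀ ρ (hρ.trans hlam)).le
    set j := sSup S with hjdef
    have hjle : ∀ ρ : Ordinal, ρ < lam → g ρ ≤ j := fun ρ h => le_csSup hSbdd ⟨ρ, h, rfl⟩
    have hjglam : j ≤ g lam := by
      apply csSup_le hSne
      rintro x ⟨ρ, hρ, rfl⟩
      exact (hglt ρ lam hρ (hσne lam hlam)).le
    have hjlt : j < σ₀ := lt_of_le_of_lt hjglam hglam.1
    have hsucclam : ∀ ρ : Ordinal, ρ < lam → ρ + 1 < lam := fun ρ h => by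
      rw [Ordinal.add_one_eq_succ]; exact hlim.succ_lt h
    have hjlim : Order.IsSuccLimit j := by
      refine Ordinal.isSuccLimit_iff.2 ⟨?_, Order.isSuccPrelimit_of_succ_lt ?_⟩
      · have h01 : g 0 < g 1 := hglt 0 1 zero_lt_one (hσne 1 (lt_trans (by simpa using hlim.succ_lt hlim.pos) hlam))
        have h1j : g 1 ≤ j := hjle 1 (by simpa using hlim.succ_lt hlim.pos)
        exact (lt_of_le_of_lt (zero_le (a := g 0)) (lt_of_lt_of_le h01 h1j)).ne'
      · intro a ha
        obtain ⟨x, ⟨ρ, hρ, rfl⟩, hax⟩ := (lt_csSup_iff hSbdd hSne).1 ha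
        have h1 : Order.succ a ≤ g ρ := Order.succ_le_of_lt hax
        have h2 : g ρ < g (ρ + 1) := hglt ρ (ρ + 1) (hxlt ρ)
          (hσne _ ((hsucclam ρ hρ).trans hlam))
        exact lt_of_le_of_lt h1 (lt_of_lt_of_le h2 (hjle (ρ + 1) (hsucclam ρ hρ)))
    have hjcand : j ∈ cand lam := by
      refine ⟨hjlt, fun ρ' h' => ?_⟩
      calc f (g ρ') < f (g (ρ' + 1)) :=
            (hgmem (ρ' + 1) (hσne _ ((hsucclam ρ' h').trans hlam))).2 ρ' (hxlt ρ')
        _ ≤ f j := hfmono _ _ (hjle _ (hsucclam ρ' h')) hjlt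
    apply le_antisymm
    · have h2 : f (g lam) ≤ f j := hfmono _ _ (hgle lam j hjcand) hjlt
      refine h2.trans ?_
      rw [hfcont j hjlt hjlim]
      apply iSup₂_le
      intro k hk
      obtain ⟨x, ⟨ρ, hρ, rfl⟩, hkx⟩ := (lt_csSup_iff hSbdd hSne).1 hk
      exact (hfmono k (g ρ) hkx.le (hgσ₀ ρ (hρ.trans hlam))).trans
        (le_iSup₂ (f := fun ρ (_ : ρ < lam) => f (g ρ)) ρ hρ)
    · exact iSup₂_le fun ρ hρ => hNmono ρ lam hρ.le hlam
  -- union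
  have hunion : (⨆ ρ, ⨆ _ : ρ < σ, f (g ρ)) = ⊤ := by
    rw [eq_top_iff]
    intro x _
    have hx : x ∈ ⨆ α, ⨆ _ : α < τ, A α := by rw [hAunion]; trivial
    by_cases hτ0 : τ = 0
    · have hbot : (⨆ (α : Ordinal), ⨆ _ : α < τ, A α) ≤ (⊥ : Submodule R M) := by
        apply iSup₂_le
        intro α hα
        rw [hτ0] at hα
        exact absurd hα (zero_le (a := α)).not_gt
      have hx0 : x = 0 := (Submodule.mem_bot R).1 (hbot hx)
      rw [hx0]; exact zero_mem _
    · have hτpos : 0 < τ := pos_iff_ne_zero.2 hτ0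
      obtain ⟨α, hα, hxα⟩ := (mem_biSup_of_chain A τ
        (fun a b hab hb => hAmono a b hab hb) hτpos x).1 hx
      rcases hkey α hα x hxα with rfl | ⟨i, hi, hxi⟩
      · exact zero_mem _
      · obtain ⟨ρ, hρ, heq⟩ := hexh i hi
        have hxρ : x ∈ f (g ρ) := heq ▸ hxi
        exact (le_iSup₂ (f := fun ρ (_ : ρ < σ) => f (g ρ)) ρ hρ) hxρ
  -- successor analysis
  have hsuccstep : ∀ ρ : Ordinal, ρ + 1 < σ →
      Module.rank R (↥(f (g (ρ + 1))) ⧸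
        Submodule.comap (f (g (ρ + 1))).subtype (f (g ρ))) ≤ κ ∧
      ∃ ν : Ordinal, ν < μ ∧ ∃ Am ∈ 𝓑 ν, ∃ Bm ∈ 𝓑 ν, Bm < Am ∧
        Nonempty ((↥(f (g (ρ + 1))) ⧸
            Submodule.comap (f (g (ρ + 1))).subtype (f (g ρ))) ≃ₗ[R]
          (↥Am ⧸ Submodule.comap Am.subtype Bm)) := by
    intro ρ hρs
    have hρσ : ρ < σ := (hxlt ρ).trans hρs
    have h2 := hgmem (ρ + 1) (hσne _ hρs)
    have hgg : g ρ < g (ρ + 1) := hglt ρ (ρ + 1) (hxlt ρ) (hσne _ hρs)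
    have hvlt : f (g ρ) < f (g (ρ + 1)) := h2.2 ρ (hxlt ρ)
    have hbelow : ∀ k : Ordinal, k < g (ρ + 1) → f k ≤ f (g ρ) := by
      intro k hk
      have hknot : k ∉ cand (ρ + 1) := fun hkc => absurd (hgle _ _ hkc) (not_le.2 hk)
      have hkσ₀ : k < σ₀ := hk.trans h2.1
      have hknot' : ¬ (k < σ₀ ∧ ∀ ρ' (_ : ρ' < ρ + 1), f (g ρ') < f k) := hknot
      push_neg at hknot'
      obtain ⟨ρ', hρ', hnlt⟩ := hknot' hkσ₀
      have hρ'ρ : ρ' ≤ ρ := by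
        rw [Ordinal.add_one_eq_succ] at hρ'
        exact Order.lt_succ_iff.1 hρ'
      have hfk : f k ≤ f (g ρ') := by
        rcases le_total k (g ρ') with h | h
        · exact hfmono _ _ h (hgσ₀ ρ' (lt_of_le_of_lt hρ'ρ hρσ))
        · have h4 := hfmono _ _ h hkσ₀
          have h5 : f (g ρ') = f k := by
            by_contra hne
            exact hnlt (lt_of_le_of_ne h4 hne)
          exact h5.ge
      exact hfk.trans (hNmono ρ' ρ hρ'ρ hρσ)
    have hne0 : g (ρ + 1) ≠ 0 := by
      intro h
      rw [h, hf0] at hvlt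
      exact absurd hvlt (not_lt_bot)
    have hnotlim : ¬ Order.IsSuccLimit (g (ρ + 1)) := by
      intro hlim
      have hceq := hfcont _ h2.1 hlim
      have hle : (⨆ j, ⨆ _ : j < g (ρ + 1), f j) ≤ f (g ρ) :=
        iSup₂_le fun k hk => hbelow k hk
      rw [hceq] at hvlt
      exact absurd (lt_of_lt_of_le hvlt hle) (lt_irrefl _)
    obtain h0 | ⟨i₀, hi₀⟩ | hcase := Ordinal.zero_or_succ_or_isSuccLimit (g (ρ + 1))
    · exact absurd h0 hne0
    swap
    · exact absurd hcase hnotlim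
    have hi₀lt : i₀ < g (ρ + 1) := by rw [← hi₀]; exact Order.lt_succ _
    have hi₀σ₀ : i₀ < σ₀ := hi₀lt.trans h2.1
    have hgρi₀ : g ρ ≤ i₀ := by
      rw [← hi₀] at hgg
      exact Order.lt_succ_iff.1 hgg
    have hfeq : f (g ρ) = f i₀ :=
      le_antisymm (hfmono _ _ hgρi₀ hi₀σ₀) (hbelow i₀ hi₀lt)
    obtain ⟨hατ, hνμ, hdec⟩ := hidx i₀ hi₀σ₀
    set α := i₀ / μ with hαdef
    set ν := i₀ % μ with hνdef
    have hν1 : ν + 1 < μ := hsuccμ hνμ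
    have hsucceq : g (ρ + 1) = μ * α + (ν + 1) := by
      rw [← hi₀]
      conv_lhs => rw [← hdec]
      rw [← add_assoc, Ordinal.add_one_eq_succ]
    have hNρ : f (g ρ) = A α ⊔ (A (α + 1) ⊓ Mc ν) := by
      rw [hfeq]
    have hNρ1 : f (g (ρ + 1)) = A α ⊔ (A (α + 1) ⊓ Mc (ν + 1)) := by
      rw [hsucceq]; exact hfval α (ν + 1) hν1
    set P := A α ⊔ (A (α + 1) ⊓ Mc ν) with hPdef
    set Q := A α ⊔ (A (α + 1) ⊓ Mc (ν + 1)) with hQdef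
    set Am := A (α + 1) ⊓ Mc (ν + 1) with hAmdef
    set Bm := (A α ⊓ Mc (ν + 1)) ⊔ (A (α + 1) ⊓ Mc ν) with hBmdef
    have hMν : Mc ν ≤ Mc (ν + 1) := hMmono ν (ν + 1) le_self_add hν1
    have hAα : A α ≤ A (α + 1) := hAmono α (α + 1) le_self_add hατ
    have hAmmem : Am ∈ 𝓑 (ν + 1) := hmem (α + 1) (ν + 1) hατ hν1
    have hBmmem : Bm ∈ 𝓑 (ν + 1) := hmem' α ν hατ hν1
    have hBA : Bm ≤ Am := sup_le (inf_le_inf hAα le_rfl) (inf_le_inf le_rfl hMν)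
    have hBP : Bm ≤ P := sup_le (le_sup_of_le_left inf_le_left) le_sup_right
    have hQP : Q = Am ⊔ P := by
      apply le_antisymm
      · exact sup_le (le_sup_of_le_right le_sup_left) le_sup_left
      · exact sup_le le_sup_right
          (sup_le le_sup_left (le_sup_of_le_right (inf_le_inf le_rfl hMν)))
    have hinf : Am ⊓ P = Bm := by
      apply le_antisymm
      · rintro x hx
        obtain ⟨hxAm, hxP⟩ := Submodule.mem_inf.1 hx
        obtain ⟨y, hy, z, hz, rfl⟩ := Submodule.mem_sup.1 hxP
        have hz' := Submodule.mem_inf.1 hz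
        have hy2 : y ∈ Mc (ν + 1) := by
          have hx2 : (y + z : M) ∈ Mc (ν + 1) := (Submodule.mem_inf.1 hxAm).2
          have hz2 : z ∈ Mc (ν + 1) := hMν hz'.2
          have h6 := sub_mem hx2 hz2
          simpa using h6
        exact add_mem (Submodule.mem_sup_left (Submodule.mem_inf.2 ⟨hy, hy2⟩))
          (Submodule.mem_sup_right hz)
      · exact le_inf hBA hBP
    have hPQlt : P < Q := by
      rw [← hNρ, ← hNρ1]; exact hvlt
    have hltAB : Bm < Am := by
      refine lt_of_le_of_ne hBA (fun he => ?_)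
      have hAmP : Am ≤ P := he ▸ hBP
      have : Q = P := by rw [hQP]; exact sup_eq_right.2 hAmP
      rw [this] at hPQlt
      exact absurd hPQlt (lt_irrefl _)
    constructor
    · rw [hNρ1, hNρ]
      have hQA : Q ≤ A (α + 1) := sup_le hAα inf_le_left
      have hPA : A α ⊓ Q ≤ P := le_trans inf_le_left le_sup_left
      exact (rank_quot_le_quot P Q (A α) (A (α + 1)) hQA hPA).trans (hrank α hατ)
    · refine ⟨ν + 1, hν1, Am, hAmmem, Bm, hBmmem, hltAB, ?_⟩
      rw [hNρ1, hNρ, ← hinf, hQP]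
      exact ⟨(LinearMap.quotientInfEquivSupQuotient Am P).symm⟩
  -- assemble
  refine ⟨σ, fun ρ => f (g ρ), ?_, ?_, ?_, ?_, hunion, hsuccstep⟩
  · intro ρ hρ
    exact ⟨g ρ / μ, g ρ % μ, (hidx _ (hgσ₀ ρ hρ)).1, (hidx _ (hgσ₀ ρ hρ)).2.1, rfl⟩
  · intro α ν hα hν
    have hi : μ * α + ν < σ₀ := by
      calc μ * α + ν < μ * α + μ := add_lt_add_right hν _
        _ = μ * Order.succ α := (Ordinal.mul_succ μ α).symm
        _ ≤ μ * τ₀ := mul_le_mul_right (Order.succ_le_of_lt (hlt.2 hα)) μ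
    obtain ⟨ρ, hρ, heq⟩ := hexh _ hi
    refine ⟨ρ, hρ, ?_⟩
    show f (g ρ) = _
    rw [heq, hfval α ν hν]
  · exact hNmono
  · exact hNcont
end
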